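/- arXiv:1007.2114 — 6 statements merged into one kernel-verified Lean document; each statement's English description precedes it below -/
import Mathlib

section
/- Let s ∈ (0, 1/2). There exists c ∈ (0,1), depending only on n and s, such that for all disjoint measurable sets A, B ⊆ ℝ^n with 0 < |A| < ∞ and |B| ≤ c|A|, setting D := ℝ^n ∖ (A ∪ B), one has L(A,D) ≥ c |A|^{(n−2s)/n}. -/
/-!
Fix `x ∈ A` and the ball around `x` of volume `3|A|`, whose radius is `r ≍ |A|^{1/n}`. Since
`|A ∪ B| ≤ 2|A|`, at least `|A|` of that ball lies in `D`, where the kernel is at least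
`r^{-(n+2s)}`. Integrating over `A` gives `L(A,D) ≥ r^{-(n+2s)} |A|² ≍ |A|^{(n-2s)/n}`.
-/

open MeasureTheory ENNReal Filter Topology

noncomputable section

/-- The ambient Euclidean space. -/
abbrev Spc (n : ℕ) := EuclideanSpace ℝ (Fin n)

/-- The double integral `L(A,D) = ∫_A ∫_D |x-y|^{-(n+2s)} dy dx ∈ [0,∞]`. -/
def Ldb (n : ℕ) (s : ℝ) (A D : Set (Spc n)) : ℝ≥0∞ :=
  ∫⁻ x in A, ∫⁻ y in D, ENNReal.ofReal (‖x - y‖ ^ (-((n : ℝ) + 2 * s)))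

open Metric Module

section Kernel

variable {E : Type*} [NormedAddCommGroup E] [MeasurableSpace E] [OpensMeasurableSpace E]
  {μ : Measure E}

theorem ofReal_rpow_neg_mul_measure_ball_inter_le_setLIntegral {D : Set E} {x : E}
    (hD : MeasurableSet D) (hx : x ∉ D) (r : ℝ) {p : ℝ} (hp : 0 ≤ p) :
    ENNReal.ofReal (r ^ (-p)) * μ (ball x r ∩ D) ≤
      ∫⁻ y in D, ENNReal.ofReal (‖x - y‖ ^ (-p)) ∂μ := by
  calc ENNReal.ofReal (r ^ (-p)) * μ (ball x r ∩ D)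
      = ∫⁻ _ in ball x r ∩ D, ENNReal.ofReal (r ^ (-p)) ∂μ := (setLIntegral_const _ _).symm
    _ ≤ ∫⁻ y in ball x r ∩ D, ENNReal.ofReal (‖x - y‖ ^ (-p)) ∂μ := by
        refine setLIntegral_mono' (measurableSet_ball.inter hD) fun y hy ↦ ?_
        obtain ⟨hyr, hyD⟩ := hy
        have hxy : 0 < ‖x - y‖ := norm_sub_pos_iff.mpr fun h ↦ hx (h ▸ hyD)
        have hyr : ‖x - y‖ ≤ r := by rw [← dist_eq_norm, dist_comm]; exact (mem_ball.mp hyr).le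
        exact ENNReal.ofReal_le_ofReal (Real.rpow_le_rpow_of_nonpos hxy hyr (neg_nonpos.mpr hp))
    _ ≤ ∫⁻ y in D, ENNReal.ofReal (‖x - y‖ ^ (-p)) ∂μ := lintegral_mono_set Set.inter_subset_right

theorem ofReal_rpow_neg_mul_mul_measure_le_setLIntegral_setLIntegral {A D : Set E}
    (hA : MeasurableSet A) (hD : MeasurableSet D) (hAD : Disjoint A D) (r : ℝ) {p : ℝ}
    (hp : 0 ≤ p) {m : ℝ≥0∞} (hm : ∀ x ∈ A, m ≤ μ (ball x r ∩ D)) :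
    ENNReal.ofReal (r ^ (-p)) * m * μ A ≤
      ∫⁻ x in A, ∫⁻ y in D, ENNReal.ofReal (‖x - y‖ ^ (-p)) ∂μ ∂μ := by
  rw [← setLIntegral_const]
  refine setLIntegral_mono' hA fun x hx ↦ ?_
  calc ENNReal.ofReal (r ^ (-p)) * m
      ≤ ENNReal.ofReal (r ^ (-p)) * μ (ball x r ∩ D) := by gcongr; exact hm x hx
    _ ≤ _ := ofReal_rpow_neg_mul_measure_ball_inter_le_setLIntegral hD
        (hAD.notMem_of_mem_left hx) r hp

end Kernel

theorem Measure.addHaar_ball_div_rpow_inv_finrank {E : Type*} [NormedAddCommGroup E]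
    [NormedSpace ℝ E] [FiniteDimensional ℝ E] [Nontrivial E] [MeasurableSpace E] [BorelSpace E]
    (μ : Measure E) [μ.IsAddHaarMeasure] (x : E) {a : ℝ} (ha : 0 ≤ a) :
    μ (ball x ((a / (μ (ball 0 1)).toReal) ^ (finrank ℝ E : ℝ)⁻¹)) = ENNReal.ofReal a := by
  have hk : 0 < (μ (ball (0 : E) 1)).toReal :=
    ENNReal.toReal_pos (measure_ball_pos μ 0 one_pos).ne' measure_ball_lt_top.ne
  have ha' : 0 ≤ a / (μ (ball (0 : E) 1)).toReal := div_nonneg ha hk.le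
  rw [Measure.addHaar_ball μ x (by positivity), Real.rpow_inv_natCast_pow ha' finrank_pos.ne',
    ENNReal.ofReal_div_of_pos hk, ENNReal.ofReal_toReal measure_ball_lt_top.ne,
    ENNReal.div_mul_cancel (measure_ball_pos μ 0 one_pos).ne' measure_ball_lt_top.ne]

theorem rpow_inv_rpow_neg_mul_mul_self {a t d p : ℝ} (ha : 0 ≤ a) (ht : 0 < t) :
    ((a * t) ^ d⁻¹) ^ (-p) * t * t = a ^ (-(p / d)) * t ^ (2 - p / d) := by
  rw [← Real.rpow_mul (mul_nonneg ha ht.le), Real.mul_rpow ha ht.le, mul_assoc (a ^ _),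
    ← Real.rpow_add_one ht.ne', mul_assoc, ← Real.rpow_add_one ht.ne']
  congr 2 <;> ring

theorem Measure.ofReal_mul_rpow_le_setLIntegral_setLIntegral_compl_union {E : Type*}
    [NormedAddCommGroup E] [NormedSpace ℝ E] [FiniteDimensional ℝ E] [Nontrivial E]
    [MeasurableSpace E] [BorelSpace E] (μ : Measure E) [μ.IsAddHaarMeasure] {A B : Set E}
    (hA : MeasurableSet A) (hB : MeasurableSet B) (hA0 : 0 < μ A) (hAtop : μ A < ⊤)
    (hBA : μ B ≤ μ A) {p : ℝ} (hp : 0 ≤ p) :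
    ENNReal.ofReal ((3 / (μ (ball 0 1)).toReal) ^ (-(p / finrank ℝ E)) *
        (μ A).toReal ^ (2 - p / finrank ℝ E)) ≤
      ∫⁻ x in A, ∫⁻ y in (A ∪ B)ᶜ, ENNReal.ofReal (‖x - y‖ ^ (-p)) ∂μ ∂μ := by
  set k := (μ (ball (0 : E) 1)).toReal
  set t := (μ A).toReal
  have ht : 0 < t := ENNReal.toReal_pos hA0.ne' hAtop.ne
  set r := (3 / k * t) ^ (finrank ℝ E : ℝ)⁻¹
  have hball (x : E) : μ (ball x r) = 3 * μ A := by
    have := Measure.addHaar_ball_div_rpow_inv_finrank μ x (a := 3 * t) (by positivity)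
    rwa [mul_div_right_comm, ENNReal.ofReal_mul zero_le_three, ENNReal.ofReal_ofNat,
      ENNReal.ofReal_toReal hAtop.ne] at this
  have hmass (x : E) (_ : x ∈ A) : μ A ≤ μ (ball x r ∩ (A ∪ B)ᶜ) :=
    calc μ A = 3 * μ A - 2 * μ A := by rw [ENNReal.sub_eq_of_eq_add (by finiteness) (by ring)]
      _ ≤ μ (ball x r) - μ (A ∪ B) := by
        rw [hball]
        gcongr
        calc μ (A ∪ B) ≤ μ A + μ B := measure_union_le A B
          _ ≤ 2 * μ A := by rw [two_mul]; gcongr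
      _ ≤ μ (ball x r ∩ (A ∪ B)ᶜ) := le_measure_sdiff
  calc ENNReal.ofReal ((3 / k) ^ (-(p / finrank ℝ E)) * t ^ (2 - p / finrank ℝ E))
      = ENNReal.ofReal (r ^ (-p) * t * t) := by
        rw [rpow_inv_rpow_neg_mul_mul_self (by positivity) ht]
    _ = ENNReal.ofReal (r ^ (-p)) * μ A * μ A := by
        rw [ENNReal.ofReal_mul (by positivity), ENNReal.ofReal_mul (by positivity),
          ENNReal.ofReal_toReal hAtop.ne]
    _ ≤ _ := ofReal_rpow_neg_mul_mul_measure_le_setLIntegral_setLIntegral hA (hA.union hB).compl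
        (disjoint_compl_right.mono_left Set.subset_union_left) r hp hmass

/-- `L(A,D) ≥ c|A|^{(n-2s)/n}` when `s ∈ (0,1/2)` and `|B| ≤ c|A|`. -/
theorem L_lower_bound_subcritical (n : ℕ) (hn : 2 ≤ n) (s : ℝ)
    (hs : s ∈ Set.Ioo (0 : ℝ) (1 / 2)) :
    ∃ c ∈ Set.Ioo (0 : ℝ) 1, ∀ A B : Set (Spc n), MeasurableSet A → MeasurableSet B →
      Disjoint A B → 0 < volume A → volume A < ⊤ →
      volume B ≤ ENNReal.ofReal c * volume A →
      ENNReal.ofReal (c * (volume A).toReal ^ (((n : ℝ) - 2 * s) / n)) ≤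
        Ldb n s A (A ∪ B)ᶜ := by
  obtain ⟨hs0, -⟩ := hs
  have : NeZero n := ⟨by omega⟩
  set C := (3 / (volume (ball (0 : Spc n) 1)).toReal) ^ (-(((n : ℝ) + 2 * s) / n))
  have hC : 0 < C := Real.rpow_pos_of_pos (div_pos three_pos
    (ENNReal.toReal_pos (measure_ball_pos volume 0 one_pos).ne' measure_ball_lt_top.ne)) _
  have hc1 : min (1 / 2) C < 1 := (min_le_left _ _).trans_lt (by norm_num)
  refine ⟨min (1 / 2) C, ⟨lt_min (by norm_num) hC, hc1⟩, ?_⟩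
  intro A B hA hB _ hA0 hAtop hBc
  have hBA : volume B ≤ volume A :=
    hBc.trans (mul_le_of_le_one_left' (ENNReal.ofReal_le_one.mpr hc1.le))
  have hexp : 2 - ((n : ℝ) + 2 * s) / n = ((n : ℝ) - 2 * s) / n := by field_simp; ring
  have hL := Measure.ofReal_mul_rpow_le_setLIntegral_setLIntegral_compl_union volume hA hB hA0
    hAtop hBA (p := n + 2 * s) (by positivity)
  rw [finrank_euclideanSpace_fin, hexp] at hL
  refine le_trans ?_ hL
  gcongr
  exact min_le_right _ _
end
end

section
/- Let s ∈ (0,1). There exists c ∈ (0,1), depending only on n and s, such that for all disjoint measurable sets A, B ⊆ ℝ^n with 0 < |A| < ∞ and c|A| < |B| < ∞, setting D := ℝ^n ∖ (A ∪ B), one has L(A,D) ≥ c |A|^{(n−2s)/n} (|B|/|A|)^{−2s/n}. -/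
/-! For `x ∈ A`, let `r` be the radius of a ball of volume `|A ∪ B|`. The ball `B(x, 2r)` has
volume `2ⁿ |A ∪ B|`, so at least `(2ⁿ - 1) |A ∪ B|` of it lies in `D`, where the kernel is at least
`(2r)^{-(n+2s)}`; hence `∫_D |x - y|^{-(n+2s)} dy ≳ |A ∪ B|^{-2s/n}`. Since
`|A ∪ B| ≤ |A| + |B| < 2|B|/c`, integrating over `A` gives `L(A,D) ≳ c^{2s/n} |A| |B|^{-2s/n}`,
and this dominates `c |A| |B|^{-2s/n}` once `c` is small, because `2s/n < 1`. -/

open MeasureTheory ENNReal Filter Topology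

noncomputable section

open Metric Module Set

theorem ofReal_rpow_neg_mul_measure_ball_sub_le_setLIntegral_compl {E : Type*}
    [NormedAddCommGroup E] [MeasurableSpace E] [OpensMeasurableSpace E] (μ : Measure E)
    {q : ℝ} (hq : 0 ≤ q) {S : Set E} (hS : MeasurableSet S) {x : E} (hx : x ∈ S) (R : ℝ) :
    ENNReal.ofReal (R ^ (-q)) * (μ (ball x R) - μ S) ≤
      ∫⁻ y in Sᶜ, ENNReal.ofReal (‖x - y‖ ^ (-q)) ∂μ := by
  have hkernel : ∀ y ∈ ball x R \ S,
      ENNReal.ofReal (R ^ (-q)) ≤ ENNReal.ofReal (‖x - y‖ ^ (-q)) := by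
    rintro y ⟨hyR, hyS⟩
    have hxy : 0 < ‖x - y‖ := norm_sub_pos_iff.mpr fun h => hyS (h ▸ hx)
    rw [mem_ball, dist_comm, dist_eq_norm] at hyR
    exact ENNReal.ofReal_le_ofReal (Real.rpow_le_rpow_of_nonpos hxy hyR.le (neg_nonpos.mpr hq))
  calc ENNReal.ofReal (R ^ (-q)) * (μ (ball x R) - μ S)
      ≤ ENNReal.ofReal (R ^ (-q)) * μ (ball x R \ S) := by gcongr; exact le_measure_sdiff
    _ = ∫⁻ _ in ball x R \ S, ENNReal.ofReal (R ^ (-q)) ∂μ := (setLIntegral_const _ _).symm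
    _ ≤ ∫⁻ y in ball x R \ S, ENNReal.ofReal (‖x - y‖ ^ (-q)) ∂μ :=
      setLIntegral_mono' (measurableSet_ball.diff hS) hkernel
    _ ≤ ∫⁻ y in Sᶜ, ENNReal.ofReal (‖x - y‖ ^ (-q)) ∂μ :=
      lintegral_mono_set (sdiff_subset_compl _ _)

theorem exists_pos_mul_rpow_le_setLIntegral_compl {E : Type*} [NormedAddCommGroup E]
    [NormedSpace ℝ E] [FiniteDimensional ℝ E] [Nontrivial E] [MeasurableSpace E] [BorelSpace E]
    (μ : Measure E) [μ.IsAddHaarMeasure] {q : ℝ} (hq : 0 ≤ q) :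
    ∃ K > 0, ∀ ⦃S : Set E⦄, MeasurableSet S → 0 < μ S → μ S ≠ ∞ → ∀ x ∈ S,
      ENNReal.ofReal (K * (μ S).toReal ^ (1 - q / finrank ℝ E)) ≤
        ∫⁻ y in Sᶜ, ENNReal.ofReal (‖x - y‖ ^ (-q)) ∂μ := by
  set d := finrank ℝ E
  have hd : (0 : ℝ) < d := by exact_mod_cast finrank_pos
  set ω := (μ (ball 0 1)).toReal
  have hω : 0 < ω := ENNReal.toReal_pos (measure_ball_pos μ 0 one_pos).ne' measure_ball_lt_top.ne
  have h2d : (1 : ℝ) < 2 ^ d := one_lt_pow₀ (one_lt_two : (1 : ℝ) < 2) finrank_pos.ne'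
  refine ⟨(2 ^ d - 1) * 2 ^ (-q) * ω ^ (q / d), by have := sub_pos.mpr h2d; positivity, ?_⟩
  intro S hS hS0 hSfin x hx
  set m := (μ S).toReal
  have hm : 0 < m := ENNReal.toReal_pos hS0.ne' hSfin
  set r := (m / ω) ^ (d : ℝ)⁻¹
  have hr : 0 < r := by positivity
  have hrd : r ^ d = m / ω := by
    rw [← Real.rpow_natCast, ← Real.rpow_mul (by positivity), inv_mul_cancel₀ hd.ne', Real.rpow_one]
  have hball_r : μ (ball x r) = μ S := by
    rw [Measure.addHaar_ball μ x hr.le, hrd, ← ENNReal.ofReal_toReal measure_ball_lt_top.ne,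
      ← ENNReal.ofReal_mul (by positivity), div_mul_cancel₀ _ hω.ne', ENNReal.ofReal_toReal hSfin]
  have hball_2r : μ (ball x (2 * r)) = ENNReal.ofReal (2 ^ d) * μ S := by
    rw [Measure.addHaar_ball_mul μ x zero_le_two, ← Measure.addHaar_ball_center μ x, hball_r]
  have key := ofReal_rpow_neg_mul_measure_ball_sub_le_setLIntegral_compl μ hq hS hx (2 * r)
  refine (le_of_eq ?_).trans key
  rw [hball_2r, ← ENNReal.ofReal_toReal hSfin, ← ENNReal.ofReal_mul (by positivity),
    ← ENNReal.ofReal_sub _ hm.le, ← ENNReal.ofReal_mul (by positivity)]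
  congr 1
  have hrq : r ^ (-q) = m ^ (-(q / d)) * ω ^ (q / d) := by
    rw [← Real.rpow_mul (by positivity), show (d : ℝ)⁻¹ * -q = -(q / d) by ring,
      Real.div_rpow hm.le hω.le, Real.rpow_neg hω.le, div_inv_eq_mul]
  rw [Real.mul_rpow zero_le_two hr.le, hrq, sub_eq_add_neg 1, Real.rpow_add hm, Real.rpow_one]
  ring

theorem exists_mem_Ioo_rpow_le {p M : ℝ} (hp : p < 1) (hM : 0 < M) :
    ∃ c ∈ Ioo (0 : ℝ) 1, c ^ (1 - p) ≤ M := by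
  have hp' : 0 < 1 - p := sub_pos.mpr hp
  refine ⟨min (1 / 2) (M ^ (1 - p)⁻¹), ⟨by positivity, (min_le_left _ _).trans_lt (by norm_num)⟩, ?_⟩
  calc min (1 / 2) (M ^ (1 - p)⁻¹) ^ (1 - p) ≤ (M ^ (1 - p)⁻¹) ^ (1 - p) := by
        gcongr; exact min_le_right _ _
    _ = M := by rw [← Real.rpow_mul hM.le, inv_mul_cancel₀ hp'.ne', Real.rpow_one]

theorem rpow_one_sub_mul_div_rpow_neg {a b : ℝ} (ha : 0 < a) (hb : 0 ≤ b) (p : ℝ) :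
    a ^ (1 - p) * (b / a) ^ (-p) = a * b ^ (-p) := by
  rw [Real.div_rpow hb ha.le, sub_eq_add_neg, Real.rpow_add ha, Real.rpow_one]
  field_simp

theorem mul_mul_rpow_neg_le {p K c a b m : ℝ} (hp : 0 ≤ p) (hc : 0 < c) (hc1 : c ≤ 1)
    (hcK : c ^ (1 - p) ≤ K * 2 ^ (-p)) (ha : 0 < a) (hab : c * a < b) (hm : 0 < m)
    (hmab : m ≤ a + b) : c * a * b ^ (-p) ≤ K * m ^ (-p) * a := by
  have hb : 0 < b := lt_of_le_of_lt (by positivity) hab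
  have hK : 0 < K := pos_of_mul_pos_left ((Real.rpow_pos_of_pos hc _).trans_le hcK) (by positivity)
  have hm2b : m ≤ 2 * b / c := by
    rw [le_div_iff₀ hc]
    nlinarith
  have hc_le : c ≤ K * (c / 2) ^ p := by
    calc c = c ^ (1 - p) * c ^ p := by rw [← Real.rpow_add hc, sub_add_cancel, Real.rpow_one]
      _ ≤ K * 2 ^ (-p) * c ^ p := by gcongr
      _ = K * (c / 2) ^ p := by
        rw [Real.div_rpow hc.le zero_le_two, Real.rpow_neg zero_le_two]; ring
  have h2bc : (2 * b / c) ^ (-p) = (c / 2) ^ p * b ^ (-p) := by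
    rw [show 2 * b / c = (c / 2)⁻¹ * b by field_simp, Real.mul_rpow (by positivity) hb.le,
      Real.inv_rpow (by positivity), Real.rpow_neg (by positivity), inv_inv]
  calc c * a * b ^ (-p) ≤ K * (c / 2) ^ p * b ^ (-p) * a := by
        rw [mul_right_comm]; gcongr
    _ = K * (2 * b / c) ^ (-p) * a := by rw [h2bc]; ring
    _ ≤ K * m ^ (-p) * a := by
        have := Real.rpow_le_rpow_of_nonpos hm hm2b (neg_nonpos.mpr hp)
        gcongr

/-- `L(A,D) ≥ c|A|^{(n-2s)/n} (|B|/|A|)^{-2s/n}` when `|B| > c|A|`. -/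
theorem L_lower_bound_large_B (n : ℕ) (hn : 2 ≤ n) (s : ℝ) (hs : s ∈ Set.Ioo (0 : ℝ) 1) :
    ∃ c ∈ Set.Ioo (0 : ℝ) 1, ∀ A B : Set (Spc n), MeasurableSet A → MeasurableSet B →
      Disjoint A B → 0 < volume A → volume A < ⊤ →
      ENNReal.ofReal c * volume A < volume B → volume B < ⊤ →
      ENNReal.ofReal (c * (volume A).toReal ^ (((n : ℝ) - 2 * s) / n) *
          ((volume B).toReal / (volume A).toReal) ^ (-(2 * s) / n)) ≤
        Ldb n s A (A ∪ B)ᶜ := by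
  obtain ⟨hs0, hs1⟩ := hs
  have : NeZero n := ⟨by omega⟩
  have hn2 : (2 : ℝ) ≤ n := by exact_mod_cast hn
  set p := 2 * s / n with hp
  have hp1 : p < 1 := by rw [div_lt_one (by positivity)]; linarith
  obtain ⟨K, hK, hKS⟩ := exists_pos_mul_rpow_le_setLIntegral_compl (volume : Measure (Spc n))
    (q := n + 2 * s) (by positivity)
  rw [finrank_euclideanSpace_fin, show 1 - ((n : ℝ) + 2 * s) / n = -p by rw [hp]; field_simp; ring] at hKS
  obtain ⟨c, hc, hcK⟩ := exists_mem_Ioo_rpow_le hp1 (by positivity : 0 < K * 2 ^ (-p))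
  refine ⟨c, hc, fun A B hA hB _ hA0 hAfin hcB hBfin => ?_⟩
  have hAB0 : 0 < volume (A ∪ B) := hA0.trans_le (measure_mono subset_union_left)
  have hABfin : volume (A ∪ B) ≠ ∞ := (measure_union_lt_top hAfin hBfin).ne
  have ha : 0 < (volume A).toReal := ENNReal.toReal_pos hA0.ne' hAfin.ne
  have hab : c * (volume A).toReal < (volume B).toReal := by
    simpa [ENNReal.toReal_mul, ENNReal.toReal_ofReal hc.1.le] using
      ENNReal.toReal_strict_mono hBfin.ne hcB
  have hmab : (volume (A ∪ B)).toReal ≤ (volume A).toReal + (volume B).toReal := by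
    rw [← ENNReal.toReal_add hAfin.ne hBfin.ne]
    exact ENNReal.toReal_mono (by finiteness) (measure_union_le A B)
  calc _ = ENNReal.ofReal (c * (volume A).toReal * (volume B).toReal ^ (-p)) := by
        rw [mul_assoc, show ((n : ℝ) - 2 * s) / n = 1 - p by rw [hp]; field_simp, neg_div,
          rpow_one_sub_mul_div_rpow_neg ha ENNReal.toReal_nonneg, mul_assoc]
    _ ≤ ENNReal.ofReal (K * (volume (A ∪ B)).toReal ^ (-p) * (volume A).toReal) :=
        ENNReal.ofReal_le_ofReal (mul_mul_rpow_neg_le (by positivity) hc.1 hc.2.le hcK ha hab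
          (ENNReal.toReal_pos hAB0.ne' hABfin) hmab)
    _ = ENNReal.ofReal (K * (volume (A ∪ B)).toReal ^ (-p)) * volume A := by
        rw [ENNReal.ofReal_mul (by positivity), ENNReal.ofReal_toReal hAfin.ne]
    _ ≤ Ldb n s A (A ∪ B)ᶜ := by
        refine le_trans ?_ (iInf_mul_le_setLIntegral _ hA)
        gcongr
        exact le_iInf₂ fun x hx => hKS (hA.union hB) hAB0 hABfin x (Or.inl hx)
end
end

section
/- Projection estimate: let n ≥ 2 and let Ω ⊆ ℝ^n be a Lebesgue measurable set. For each i ∈ {1,…,n}, let Π_i(Ω) ⊆ ℝ^{n−1} denote the orthogonal projection of Ω onto the coordinate hyperplane {x_i = 0}, i.e., the image of Ω under the map deleting the i-th coordinate. Then |Ω|^{n−1} ≤ ∏_{i=1}^{n} λ*(Π_i(Ω)), where |·| is n-dimensional Lebesgue measure and λ* is (n−1)-dimensional Lebesgue outer measure. -/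
/-!
This is the Loomis–Whitney inequality. Let `g i` be the indicator of the cylinder over (a
measurable hull of) the `i`-th projection of `Ω`; it does not depend on `x i`, and `Ω` lies in
the set where all `g i` equal `1`. Integrating out one coordinate `x j` at a time, `g j` is a
constant factor while Hölder's inequality with `n - 1` exponents `1 / (n - 1)` bounds the
integral of the other factors, so `∫ ∏ i, g i ^ (1 / (n - 1)) ≤ ∏ i, (∫ g i) ^ (1 / (n - 1))`,
and `∫ g i` is the measure of the `i`-th projection.
-/

open MeasureTheory Finset Function
open scoped ENNReal

theorem measure_le_lintegral_prod_indicator_rpow {α κ : Type*} [MeasurableSpace α] [Fintype κ]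
    (ν : Measure α) {T : κ → Set α} (hT : ∀ i, MeasurableSet (T i)) {Ω : Set α}
    (hΩ : Ω ⊆ ⋂ i, T i) (q : ℝ) :
    ν Ω ≤ ∫⁻ y, ∏ i, (T i).indicator 1 y ^ q ∂ν := calc
  ν Ω ≤ ν (⋂ i, T i) := measure_mono hΩ
  _ = ∫⁻ y, (⋂ i, T i).indicator 1 y ∂ν := (lintegral_indicator_one (.iInter hT)).symm
  _ ≤ ∫⁻ y, ∏ i, (T i).indicator 1 y ^ q ∂ν := by
      refine lintegral_mono fun y => ?_
      by_cases hy : y ∈ ⋂ i, T i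
      · simp_all
      · simp [hy]

section LoomisWhitney

variable {ι : Type*} [DecidableEq ι] {A : ι → Type*} [∀ i, MeasurableSpace (A i)]
  (μ : ∀ i, Measure (A i)) {p : ℝ}

theorem lmarginal_update_of_update_eq [∀ i, SigmaFinite (μ i)]
    {f : (∀ i, A i) → ℝ≥0∞} (hf : Measurable f)
    {i : ι} (hfi : ∀ x t, f (update x i t) = f x) (s : Finset ι) (x : ∀ i, A i) (t : A i) :
    (∫⋯∫⁻_s, f ∂μ) (update x i t) = (∫⋯∫⁻_s, f ∂μ) x := by
  by_cases hi : i ∈ s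
  · exact lmarginal_update_of_mem μ hi f x t
  · rw [lmarginal_update_of_notMem hf hi]
    congr 1 with y
    exact hfi y t

theorem lintegral_prod_rpow_update_le [Fintype ι] (hp₀ : 0 ≤ p)
    (hp : ((Fintype.card ι - 1 : ℕ) : ℝ) * p = 1) {g : ι → (∀ i, A i) → ℝ≥0∞}
    (hg : ∀ i, Measurable (g i)) {j : ι} (hgj : ∀ x t, g j (update x j t) = g j x)
    (z : ∀ i, A i) :
    ∫⁻ t, ∏ i, g i (update z j t) ^ p ∂μ j ≤
      g j z ^ p * ∏ i ∈ univ.erase j, (∫⁻ t, g i (update z j t) ∂μ j) ^ p := by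
  have hsum : ∑ _i ∈ univ.erase j, p = 1 := by
    rwa [sum_const, nsmul_eq_mul, card_erase_of_mem (mem_univ j), card_univ]
  have hmeas : ∀ i, Measurable fun t => g i (update z j t) :=
    fun i => (hg i).comp (measurable_update z)
  calc ∫⁻ t, ∏ i, g i (update z j t) ^ p ∂μ j
      = ∫⁻ t, g j z ^ p * ∏ i ∈ univ.erase j, g i (update z j t) ^ p ∂μ j := by
        simp_rw [← mul_prod_erase univ _ (mem_univ j), hgj]
    _ = g j z ^ p * ∫⁻ t, ∏ i ∈ univ.erase j, g i (update z j t) ^ p ∂μ j :=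
        lintegral_const_mul _ (Finset.measurable_prod _ fun i _ => (hmeas i).pow_const p)
    _ ≤ g j z ^ p * ∏ i ∈ univ.erase j, (∫⁻ t, g i (update z j t) ∂μ j) ^ p := by
        gcongr
        exact ENNReal.lintegral_prod_norm_pow_le _ (fun i _ => (hmeas i).aemeasurable) hsum
          fun _ _ => hp₀

theorem lmarginal_prod_rpow_le_prod_lmarginal_erase [Fintype ι] [∀ i, SigmaFinite (μ i)]
    (hp₀ : 0 ≤ p) (hp : ((Fintype.card ι - 1 : ℕ) : ℝ) * p = 1) (s : Finset ι)
    {g : ι → (∀ i, A i) → ℝ≥0∞} (hg : ∀ i, Measurable (g i))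
    (hgi : ∀ i x t, g i (update x i t) = g i x) (x : ∀ i, A i) :
    (∫⋯∫⁻_s, (fun y => ∏ i, g i y ^ p) ∂μ) x ≤ ∏ i, (∫⋯∫⁻_(s.erase i), g i ∂μ) x ^ p := by
  induction s using Finset.induction generalizing g with
  | empty => simp
  | @insert j s hj ih =>
    -- integrating out `x j` leaves `g j` alone and replaces every other `g i` by its marginal
    set h := update (fun i => ∫⋯∫⁻_{j}, g i ∂μ) j (g j) with h_def
    have hh : ∀ i, Measurable (h i) := by
      intro i
      rcases eq_or_ne i j with rfl | hij
      · simpa [h_def] using hg i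
      · simpa [h_def, hij] using (hg i).lmarginal μ
    have hhi : ∀ i x t, h i (update x i t) = h i x := by
      intro i
      rcases eq_or_ne i j with rfl | hij
      · simpa [h_def] using hgi i
      · simpa [h_def, hij] using lmarginal_update_of_update_eq μ (hg i) (hgi i) {j}
    have hprod : ∀ z, ∏ i, h i z ^ p =
        g j z ^ p * ∏ i ∈ univ.erase j, (∫⁻ t, g i (update z j t) ∂μ j) ^ p := by
      intro z
      rw [← mul_prod_erase univ _ (mem_univ j)]
      congr 1
      · simp [h_def]
      · refine prod_congr rfl fun i hi => ?_
        simp [h_def, ne_of_mem_erase hi, lmarginal_singleton]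
    have hmarg : ∀ i, ∫⋯∫⁻_(s.erase i), h i ∂μ = ∫⋯∫⁻_((insert j s).erase i), g i ∂μ := by
      intro i
      rcases eq_or_ne i j with rfl | hij
      · simp [h_def, erase_insert hj, erase_eq_of_notMem hj]
      · rw [h_def, update_of_ne hij, ← lmarginal_union μ (g i) (hg i)
          (disjoint_singleton_right.mpr (by simp [hj, Ne.symm hij])),
          erase_insert_of_ne (Ne.symm hij), insert_eq, union_comm]
    calc (∫⋯∫⁻_(insert j s), (fun y => ∏ i, g i y ^ p) ∂μ) x
        = (∫⋯∫⁻_s, (fun z => ∫⁻ t, ∏ i, g i (update z j t) ^ p ∂μ j) ∂μ) x :=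
          by rw [lmarginal_insert' _ (Finset.measurable_prod _ fun i _ => (hg i).pow_const p) hj]
      _ ≤ (∫⋯∫⁻_s, (fun z => ∏ i, h i z ^ p) ∂μ) x := by
          refine lmarginal_mono (fun z => ?_) x
          rw [hprod]
          exact lintegral_prod_rpow_update_le μ hp₀ hp hg (hgi j) z
      _ ≤ ∏ i, (∫⋯∫⁻_(s.erase i), h i ∂μ) x ^ p := ih hh hhi
      _ = ∏ i, (∫⋯∫⁻_((insert j s).erase i), g i ∂μ) x ^ p := by simp only [hmarg]

theorem lmarginal_erase_comp_restrict [Fintype ι] [∀ i, SigmaFinite (μ i)] (i : ι)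
    {f : (∀ j : {j : ι // j ≠ i}, A j) → ℝ≥0∞} (hf : Measurable f) (x : ∀ i, A i) :
    (∫⋯∫⁻_(univ.erase i), (fun y => f fun j => y j) ∂μ) x =
      ∫⁻ y, f y ∂Measure.pi fun j : {j : ι // j ≠ i} => μ j := by
  let e : (univ.erase i : Finset ι) ≃ {j : ι // j ≠ i} :=
    Equiv.subtypeEquivRight fun j => by simp
  have he := measurePreserving_piCongrLeft (fun j : {j : ι // j ≠ i} => μ j) e
  rw [lmarginal, ← he.lintegral_comp hf]
  congr 1 with y
  congr 1 with j
  have hj : (j : ι) ∈ univ.erase i := by simpa using j.2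
  simp only [updateFinset, hj, dite_true, MeasurableEquiv.coe_piCongrLeft]
  exact (Equiv.piCongrLeft_apply_apply (fun j : {j : ι // j ≠ i} => A j) e y ⟨j, hj⟩).symm

theorem measure_pi_pow_le_prod_measure_image_restrict [Fintype ι] [∀ i, SigmaFinite (μ i)]
    (hι : 2 ≤ Fintype.card ι) (Ω : Set (∀ i, A i)) :
    Measure.pi μ Ω ^ (Fintype.card ι - 1) ≤
      ∏ i, Measure.pi (fun j : {j : ι // j ≠ i} => μ j)
        ((fun (x : ∀ i, A i) (j : {j : ι // j ≠ i}) => x j) '' Ω) := by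
  set m := Fintype.card ι - 1
  have hm : m ≠ 0 := by omega
  have hp : (m : ℝ) * (m : ℝ)⁻¹ = 1 := mul_inv_cancel₀ (by exact_mod_cast hm)
  rcases Ω.eq_empty_or_nonempty with rfl | ⟨x, -⟩
  · simp [hm]
  set P := fun i => Measure.pi fun j : {j : ι // j ≠ i} => μ j
  set proj : ∀ i, (∀ i, A i) → ∀ j : {j : ι // j ≠ i}, A j := fun i x j => x j
  have hproj : ∀ i, Measurable (proj i) :=
    fun i => measurable_pi_lambda _ fun j => measurable_pi_apply _
  -- the projections need not be measurable, so we pass to measurable hulls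
  set S := fun i => toMeasurable (P i) (proj i '' Ω)
  have hS : ∀ i, MeasurableSet (S i) := fun i => measurableSet_toMeasurable _ _
  set g : ι → (∀ i, A i) → ℝ≥0∞ := fun i y => (S i).indicator 1 (proj i y)
  have hg : ∀ i, Measurable (g i) := fun i => (measurable_one.indicator (hS i)).comp (hproj i)
  have hgi : ∀ i y t, g i (update y i t) = g i y := fun i y t => by
    simp only [g, show proj i (update y i t) = proj i y from funext fun j => update_of_ne j.2 t y]
  have hmarg : ∀ i, (∫⋯∫⁻_(univ.erase i), g i ∂μ) x = P i (proj i '' Ω) := fun i => by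
    rw [← measure_toMeasurable, ← lintegral_indicator_one (hS i),
      ← lmarginal_erase_comp_restrict μ i (measurable_one.indicator (hS i))]
  have hΩ : Measure.pi μ Ω ≤ ∏ i, P i (proj i '' Ω) ^ (m : ℝ)⁻¹ := calc
    Measure.pi μ Ω ≤ ∫⁻ y, ∏ i, g i y ^ (m : ℝ)⁻¹ ∂Measure.pi μ :=
        measure_le_lintegral_prod_indicator_rpow _ (fun i => hproj i (hS i))
          (fun y hy => Set.mem_iInter.2 fun i => subset_toMeasurable _ _ ⟨y, hy, rfl⟩) _
    _ = (∫⋯∫⁻_univ, (fun y => ∏ i, g i y ^ (m : ℝ)⁻¹) ∂μ) x := lintegral_eq_lmarginal_univ x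
    _ ≤ ∏ i, (∫⋯∫⁻_(univ.erase i), g i ∂μ) x ^ (m : ℝ)⁻¹ :=
        lmarginal_prod_rpow_le_prod_lmarginal_erase μ (by positivity) hp univ hg hgi x
    _ = ∏ i, P i (proj i '' Ω) ^ (m : ℝ)⁻¹ := by simp only [hmarg]
  calc Measure.pi μ Ω ^ m
      ≤ (∏ i, P i (proj i '' Ω) ^ (m : ℝ)⁻¹) ^ m := by gcongr
    _ = ∏ i, P i (proj i '' Ω) := by simp only [← prod_pow, ENNReal.rpow_inv_natCast_pow hm]

end LoomisWhitney

theorem projection_estimate_general (n : ℕ) (hn : 2 ≤ n) (Ω : Set (Fin n → ℝ)) :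
    volume Ω ^ (n - 1) ≤
      ∏ i : Fin n,
        volume ((fun (x : Fin n → ℝ) (j : {j : Fin n // j ≠ i}) => x j) '' Ω) := by
  have h := measure_pi_pow_le_prod_measure_image_restrict (fun _ : Fin n => (volume : Measure ℝ))
    (by rwa [Fintype.card_fin]) Ω
  rwa [Fintype.card_fin] at h

/-- projection estimate. For a measurable `Ω ⊆ ℝ^n`,
`|Ω|^{n-1} ≤ ∏_i λ*(Π_i(Ω))`, where `Π_i` deletes the `i`-th coordinate and the
(n-1)-dimensional Lebesgue outer measure of the (possibly nonmeasurable) projection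
is given by evaluating the measure `volume` on it. -/
theorem projection_estimate (n : ℕ) (hn : 2 ≤ n) (Ω : Set (Fin n → ℝ))
    (hΩ : MeasurableSet Ω) :
    volume Ω ^ (n - 1) ≤
      ∏ i : Fin n,
        volume ((fun (x : Fin n → ℝ) (j : {j : Fin n // j ≠ i}) => x j) '' Ω) :=
  projection_estimate_general n hn Ω
end

section
/- Localized estimate for s ∈ (1/2,1): let n ≥ 2, s ∈ (1/2,1) and σ > 0. There exists δ > 0, depending only on n, s and σ, such that for every cube Q ⊂ ℝ^n and all disjoint measurable sets A, D ⊆ Q with min{|A|, |D|} ≥ σ|Q|, setting B := Q ∖ (A ∪ D), one has L(A,D) ≥ δ |Q|^{(n−2s)/n} (|Q|/|B|)^{2s−1}, where the right-hand side is interpreted as +∞ when |B| = 0. -/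
open MeasureTheory ENNReal Filter Topology

noncomputable section

/-- An axis-parallel cube in `ℝ^n` with lower corner `a` and side length `h`. -/
def Cube (n : ℕ) (a : Spc n) (h : ℝ) : Set (Spc n) :=
  {x : Spc n | ∀ i : Fin n, x i ∈ Set.Icc (a i) (a i + h)}

/-!
Cut the cube `Q` of side `h` into `Mⁿ` cells of side `R = h / M` and call a cell heavy for a set if
the set fills at least `σ/4` of it. At least `(3σ/4) Mⁿ` cells are heavy for `A`, as many for `D`,
and a cell heavy for neither is half filled by the gap `B = Q \ (A ∪ D)`. The walk from an
`A`-heavy cell to a `D`-heavy one changing one coordinate after the other crosses a grid edge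
leaving the `A`-heavy cells, and each edge is crossed by at most `Mⁿ⁺¹` of these walks. Hence, if
`|B| ≲ σ² hⁿ / (n M)`, some `σ² Mⁿ⁻¹ / n` cells heavy for `A` lie next to cells heavy for `D`;
each such pair contributes `≳ σ² R²ⁿ R^{-(n+2s)}` to `L(A,D)`, so `L(A,D) ≳ h^{n-2s} M^{2s-1}`.
Take `M ≈ hⁿ / |B|`: if this is `< 1`, the bound `L(A,D) ≥ |A| |D| (h √n)^{-(n+2s)}` suffices,
and if `|B| = 0` every `M` is admissible.
-/

open Finset

lemma Nat.exists_consecutive_of_not {P : ℕ → Prop} {s t : ℕ} (hst : s ≤ t) (hs : P s)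
    (ht : ¬ P t) : ∃ j, s ≤ j ∧ j < t ∧ P j ∧ ¬ P (j + 1) := by
  induction t, hst using Nat.le_induction with
  | base => exact absurd hs ht
  | succ t hst ih =>
    by_cases hPt : P t
    · exact ⟨t, hst, t.lt_succ_self, hPt, ht⟩
    · obtain ⟨j, hsj, hjt, hPj, hPj'⟩ := ih hPt
      exact ⟨j, hsj, hjt.trans t.lt_succ_self, hPj, hPj'⟩

lemma Fin.exists_consecutive_of_not {M : ℕ} {P : Fin M → Prop} {u u' : Fin M} (hu : P u)
    (hu' : ¬ P u') : ∃ j j' : Fin M, P j ∧ ¬ P j' ∧ ((j' : ℕ) = j + 1 ∨ (j : ℕ) = j' + 1) := by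
  rcases le_total u u' with h | h
  · obtain ⟨j, -, hj, ⟨hjM, hPj⟩, hPj'⟩ := Nat.exists_consecutive_of_not
      (P := fun j => ∃ h : j < M, P ⟨j, h⟩) (Fin.le_def.mp h) ⟨u.2, hu⟩ fun ⟨_, h⟩ => hu' h
    exact ⟨⟨j, hjM⟩, ⟨j + 1, by omega⟩, hPj, fun h => hPj' ⟨_, h⟩, Or.inl rfl⟩
  · obtain ⟨j, -, hj, ⟨hjM, hPj⟩, hPj'⟩ := Nat.exists_consecutive_of_not
      (P := fun j => ∃ h : j < M, ¬ P ⟨j, h⟩) (Fin.le_def.mp h) ⟨u'.2, hu'⟩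
      fun ⟨_, h⟩ => h hu
    exact ⟨⟨j + 1, by omega⟩, ⟨j, hjM⟩, not_not.mp fun h => hPj' ⟨_, h⟩, hPj, Or.inr rfl⟩

section Grid

variable {n M : ℕ}

def GridAdj (k : Fin n) (q q' : Fin n → Fin M) : Prop :=
  (∀ i, i ≠ k → q i = q' i) ∧ ((q' k : ℕ) = q k + 1 ∨ (q k : ℕ) = q' k + 1)

def GridNear (v w : Fin n → Fin M) : Prop :=
  ∀ i, (v i : ℕ) ≤ w i + 1 ∧ (w i : ℕ) ≤ v i + 1

instance (k : Fin n) : DecidableRel (GridAdj (M := M) k) := fun _ _ =>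
  inferInstanceAs (Decidable (_ ∧ _))

instance : DecidableRel (GridNear (n := n) (M := M)) := fun _ _ =>
  inferInstanceAs (Decidable (∀ _, _))

lemma GridAdj.symm {k : Fin n} {q q' : Fin n → Fin M} (h : GridAdj k q q') : GridAdj k q' q :=
  ⟨fun i hi => (h.1 i hi).symm, h.2.symm⟩

lemma GridAdj.gridNear {k : Fin n} {q q' : Fin n → Fin M} (h : GridAdj k q q') :
    GridNear q q' := by
  intro i
  by_cases hik : i = k
  · subst hik; have := h.2; omega
  · have := congrArg Fin.val (h.1 i hik); omega

lemma gridNear_refl (v : Fin n → Fin M) : GridNear v v := fun _ => by omega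

lemma GridAdj.eq_of_lt_iff {k : Fin n} {q q₁ q₂ : Fin n → Fin M} (h₁ : GridAdj k q q₁)
    (h₂ : GridAdj k q q₂) (hlt : q₁ k < q k ↔ q₂ k < q k) : q₁ = q₂ := by
  funext i
  by_cases hik : i = k
  · subst hik
    rw [Fin.lt_def, Fin.lt_def] at hlt
    apply Fin.ext
    rcases h₁.2 with h₁ | h₁ <;> rcases h₂.2 with h₂ | h₂ <;> omega
  · rw [← h₁.1 i hik, ← h₂.1 i hik]

/-- Walking from `a` to `d` one coordinate after the other, one crosses the boundary of `P`. -/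
lemma exists_gridAdj_crossing (P : (Fin n → Fin M) → Prop) {a d : Fin n → Fin M} (ha : P a)
    (hd : ¬ P d) : ∃ k q q', GridAdj k q q' ∧ P q ∧ ¬ P q' ∧
      (∀ i, i < k → q i = d i) ∧ (∀ i, k < i → q i = a i) := by
  classical
  let p : ℕ → Fin n → Fin M := fun j i => if (i : ℕ) < j then d i else a i
  obtain ⟨j, -, hjn, hPj, hPj'⟩ := Nat.exists_consecutive_of_not (P := fun j => P (p j))
    (Nat.zero_le n) (by simpa [p] using ha) (by simpa [p] using hd)
  let k : Fin n := ⟨j, hjn⟩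
  have hpk : p j = Function.update (p j) k (a k) := by simp [p, k]
  have hpk' : p (j + 1) = Function.update (p j) k (d k) := by
    funext i
    rcases eq_or_ne i k with rfl | hik
    · simp [p, k]
    · have : (i : ℕ) ≠ j := fun h => hik (Fin.ext h)
      simp only [p, Function.update_of_ne hik]
      split_ifs <;> first | rfl | omega
  obtain ⟨u, u', hu, hu', huu'⟩ := Fin.exists_consecutive_of_not
    (P := fun u => P (Function.update (p j) k u)) (u := a k) (u' := d k)
    (by rwa [← hpk]) (by rwa [← hpk'])
  refine ⟨k, _, _, ⟨fun i hik => ?_, by simpa using huu'⟩, hu, hu', fun i hik => ?_,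
    fun i hik => ?_⟩
  · simp [Function.update_of_ne hik]
  · rw [Function.update_of_ne hik.ne]
    simp [p, show (i : ℕ) < j from hik]
  · rw [Function.update_of_ne hik.ne']
    simp [p, show ¬ (i : ℕ) < j from not_lt.mpr (le_of_lt hik)]

end Grid

section GridCount

variable {n M : ℕ}

/-- The pairs `(a, d)` whose coordinatewise walk from `a` to `d` passes through `q` while moving
in direction `k`. -/
def walkPairs (k : Fin n) (q : Fin n → Fin M) : Finset ((Fin n → Fin M) × (Fin n → Fin M)) :=
  {p | (∀ i, i < k → q i = p.2 i) ∧ ∀ i, k < i → q i = p.1 i}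

def edgeBoundary (P : Finset (Fin n → Fin M)) :
    Finset (Fin n × (Fin n → Fin M) × (Fin n → Fin M)) :=
  {e | GridAdj e.1 e.2.1 e.2.2 ∧ e.2.1 ∈ P ∧ e.2.2 ∉ P}

/-- Such a pair is determined by its coordinates `a i` for `i ≤ k` and `d i` for `i ≥ k`. -/
lemma card_walkPairs_le (k : Fin n) (q : Fin n → Fin M) : #(walkPairs k q) ≤ M ^ (n + 1) := by
  have hinj : Set.InjOn (fun p : (Fin n → Fin M) × (Fin n → Fin M) =>
      ((fun i => if i ≤ k then p.1 i else p.2 i), p.2 k)) (walkPairs k q) := by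
    rintro ⟨a, d⟩ hp ⟨a', d'⟩ hp' heq
    simp only [walkPairs, coe_filter, mem_univ, true_and, Set.mem_ofPred_eq] at hp hp'
    simp only [Prod.mk.injEq, funext_iff] at heq
    obtain ⟨hz, hk⟩ := heq
    refine Prod.ext (funext fun i => ?_) (funext fun i => ?_) <;> dsimp only
    · by_cases hik : i ≤ k
      · simpa [hik] using hz i
      · rw [← hp.2 i (not_le.mp hik), ← hp'.2 i (not_le.mp hik)]
    · rcases lt_trichotomy i k with hik | rfl | hik
      · rw [← hp.1 i hik, ← hp'.1 i hik]
      · exact hk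
      · simpa [not_le.mpr hik] using hz i
  calc #(walkPairs k q) ≤ #(univ : Finset ((Fin n → Fin M) × Fin M)) :=
        card_le_card_of_injOn _ (fun _ _ => mem_coe.mpr (mem_univ _)) hinj
    _ = M ^ (n + 1) := by simp [pow_succ]

lemma card_mul_card_compl_le (P : Finset (Fin n → Fin M)) :
    #P * #Pᶜ ≤ M ^ (n + 1) * #(edgeBoundary P) := by
  have hcover : P ×ˢ Pᶜ ⊆ (edgeBoundary P).biUnion fun e => walkPairs e.1 e.2.1 := by
    rintro ⟨a, d⟩ had
    rw [mem_product, mem_compl] at had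
    obtain ⟨k, q, q', hadj, hq, hq', hlt, hgt⟩ := exists_gridAdj_crossing (· ∈ P) had.1 had.2
    exact mem_biUnion.mpr ⟨(k, q, q'), by simp [edgeBoundary, hadj, hq, hq'],
      by simpa [walkPairs] using And.intro hlt hgt⟩
  calc #P * #Pᶜ = #(P ×ˢ Pᶜ) := (card_product _ _).symm
    _ ≤ ∑ e ∈ edgeBoundary P, #(walkPairs e.1 e.2.1) := (card_le_card hcover).trans card_biUnion_le
    _ ≤ #(edgeBoundary P) * M ^ (n + 1) :=
        sum_le_card_nsmul _ _ _ fun e _ => card_walkPairs_le e.1 e.2.1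
    _ = M ^ (n + 1) * #(edgeBoundary P) := mul_comm _ _

lemma card_gridAdj_fst_mem_le (T : Finset (Fin n → Fin M)) :
    #{e : Fin n × (Fin n → Fin M) × (Fin n → Fin M) | GridAdj e.1 e.2.1 e.2.2 ∧ e.2.1 ∈ T} ≤
      2 * n * #T := by
  refine (card_le_card_of_injOn (t := T ×ˢ (univ : Finset (Fin n × Bool)))
    (fun e => (e.2.1, e.1, decide (e.2.2 e.1 < e.2.1 e.1))) (fun e he => by simp_all) ?_).trans
    (by simp [mul_comm])
  rintro ⟨k, q, q₁⟩ h₁ ⟨k', q', q₂⟩ h₂ heq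
  simp only [coe_filter, mem_univ, true_and, Set.mem_ofPred_eq, Prod.mk.injEq,
    decide_eq_decide] at h₁ h₂ heq
  obtain ⟨rfl, rfl, hlt⟩ := heq
  rw [h₁.1.eq_of_lt_iff h₂.1 hlt]

lemma card_gridAdj_snd_mem_le (T : Finset (Fin n → Fin M)) :
    #{e : Fin n × (Fin n → Fin M) × (Fin n → Fin M) | GridAdj e.1 e.2.1 e.2.2 ∧ e.2.2 ∈ T} ≤
      2 * n * #T :=
  (card_le_card_of_injOn (fun e => (e.1, e.2.2, e.2.1))
    (fun e he => by simp_all [GridAdj.symm]) (fun e _ e' _ h => by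
      simp only [Prod.mk.injEq] at h; exact Prod.ext h.1 (Prod.ext h.2.2 h.2.1))).trans
    (card_gridAdj_fst_mem_le T)

/-- A discrete isoperimetric inequality. -/
theorem card_mul_card_le_card_near (hM : 0 < M) (P Q : Finset (Fin n → Fin M)) :
    #P * #Q ≤ (2 * n + 1) * M ^ (n + 1) *
      (#{v ∈ P | ∃ w ∈ Q, GridNear v w} + #(P ∪ Q)ᶜ) := by
  set S := {v ∈ P | ∃ w ∈ Q, GridNear v w}
  set X := (P ∪ Q)ᶜ
  have hQ : #Q ≤ #Pᶜ + #S := by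
    refine (card_le_card fun v hv => ?_).trans (card_union_le _ _)
    by_cases hvP : v ∈ P
    · exact mem_union_right _ (mem_filter.mpr ⟨hvP, v, hv, gridNear_refl v⟩)
    · exact mem_union_left _ (mem_compl.mpr hvP)
  have hbdry : #(edgeBoundary P) ≤ 2 * n * (#S + #X) := by
    have hsub : edgeBoundary P ⊆
        ({e | GridAdj e.1 e.2.1 e.2.2 ∧ e.2.1 ∈ S} : Finset (Fin n × _ × _)) ∪
        ({e | GridAdj e.1 e.2.1 e.2.2 ∧ e.2.2 ∈ X} : Finset (Fin n × _ × _)) := by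
      rintro ⟨k, q, q'⟩ he
      simp only [edgeBoundary, mem_filter, mem_univ, true_and] at he
      obtain ⟨hadj, hq, hq'⟩ := he
      by_cases hq'Q : q' ∈ Q
      · exact mem_union_left _ (by simpa [S] using ⟨hadj, hq, q', hq'Q, hadj.gridNear⟩)
      · exact mem_union_right _ (by simpa [X] using ⟨hadj, hq', hq'Q⟩)
    calc #(edgeBoundary P) ≤ 2 * n * #S + 2 * n * #X :=
          (card_le_card hsub).trans ((card_union_le _ _).trans
            (add_le_add (card_gridAdj_fst_mem_le S) (card_gridAdj_snd_mem_le X)))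
      _ = 2 * n * (#S + #X) := by ring
  have hP : #P ≤ M ^ (n + 1) :=
    (card_le_univ P).trans (by simpa using Nat.pow_le_pow_right hM n.le_succ)
  calc #P * #Q ≤ #P * #Pᶜ + #P * #S := by rw [← mul_add]; exact Nat.mul_le_mul_left _ hQ
    _ ≤ M ^ (n + 1) * (2 * n * (#S + #X)) + M ^ (n + 1) * (#S + #X) :=
        add_le_add ((card_mul_card_compl_le P).trans (Nat.mul_le_mul_left _ hbdry))
          (Nat.mul_le_mul hP (Nat.le_add_right _ _))
    _ = (2 * n + 1) * M ^ (n + 1) * (#S + #X) := by ring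

end GridCount

section Cells

variable {n M : ℕ}

lemma setOf_forall_mem_eq_preimage (S : Fin n → Set ℝ) :
    {x : Spc n | ∀ i, x i ∈ S i} =
      (MeasurableEquiv.toLp 2 (Fin n → ℝ)).symm ⁻¹' Set.univ.pi S := by
  ext x
  simp [Set.mem_pi]

lemma measurableSet_setOf_forall_mem {S : Fin n → Set ℝ} (hS : ∀ i, MeasurableSet (S i)) :
    MeasurableSet {x : Spc n | ∀ i, x i ∈ S i} := by
  rw [setOf_forall_mem_eq_preimage]
  exact (MeasurableEquiv.toLp 2 (Fin n → ℝ)).symm.measurable (.univ_pi hS)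

lemma volume_setOf_forall_mem {S : Fin n → Set ℝ} (hS : ∀ i, MeasurableSet (S i)) :
    volume {x : Spc n | ∀ i, x i ∈ S i} = ∏ i, volume (S i) := by
  rw [setOf_forall_mem_eq_preimage,
    (EuclideanSpace.volume_preserving_symm_measurableEquiv_toLp (Fin n)).measure_preimage
      (MeasurableSet.univ_pi hS).nullMeasurableSet, volume_pi_pi]

lemma measurableSet_cube (a : Spc n) (h : ℝ) : MeasurableSet (Cube n a h) :=
  measurableSet_setOf_forall_mem fun _ => measurableSet_Icc

lemma volume_cube (a : Spc n) {h : ℝ} (hh : 0 ≤ h) :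
    volume (Cube n a h) = ENNReal.ofReal (h ^ n) := by
  rw [Cube, volume_setOf_forall_mem fun _ => measurableSet_Icc]
  simp [ENNReal.ofReal_pow hh]

lemma volume_cube_diff_Ico (a : Spc n) {h : ℝ} (hh : 0 ≤ h) :
    volume (Cube n a h \ {x : Spc n | ∀ i, x i ∈ Set.Ico (a i) (a i + h)}) = 0 := by
  have hIco : volume {x : Spc n | ∀ i, x i ∈ Set.Ico (a i) (a i + h)} = ENNReal.ofReal (h ^ n) := by
    rw [volume_setOf_forall_mem fun _ => measurableSet_Ico]
    simp [ENNReal.ofReal_pow hh]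
  have hsub : {x : Spc n | ∀ i, x i ∈ Set.Ico (a i) (a i + h)} ⊆ Cube n a h :=
    fun x hx i => Set.Ico_subset_Icc_self (hx i)
  rw [measure_sdiff hsub
    (measurableSet_setOf_forall_mem fun _ => measurableSet_Ico).nullMeasurableSet
    (by rw [hIco]; exact ENNReal.ofReal_ne_top), hIco, volume_cube a hh, tsub_self]

def gridCell (a : Spc n) (R : ℝ) (v : Fin n → Fin M) : Set (Spc n) :=
  {x | ∀ i, x i ∈ Set.Ico (a i + v i * R) (a i + (v i + 1) * R)}

lemma measurableSet_gridCell (a : Spc n) (R : ℝ) (v : Fin n → Fin M) :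
    MeasurableSet (gridCell a R v) :=
  measurableSet_setOf_forall_mem fun _ => measurableSet_Ico

lemma volume_gridCell (a : Spc n) {R : ℝ} (hR : 0 ≤ R) (v : Fin n → Fin M) :
    volume (gridCell a R v) = ENNReal.ofReal (R ^ n) := by
  simp only [gridCell, volume_setOf_forall_mem fun _ => measurableSet_Ico, Real.volume_Ico]
  simp [add_mul, ENNReal.ofReal_pow hR]

lemma gridCell_subset_cube (a : Spc n) {R : ℝ} (hR : 0 ≤ R) (v : Fin n → Fin M) :
    gridCell a R v ⊆ Cube n a (M * R) := by
  intro x hx i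
  have hv : ((v i : ℕ) : ℝ) + 1 ≤ M := by exact_mod_cast (v i).isLt
  have := hx i
  constructor <;> nlinarith [this.1, this.2]

lemma pairwise_disjoint_gridCell (a : Spc n) {R : ℝ} (hR : 0 ≤ R) :
    Pairwise fun v w : Fin n → Fin M => Disjoint (gridCell a R v) (gridCell a R w) := by
  intro v w hvw
  obtain ⟨i, hi⟩ := Function.ne_iff.mp hvw
  have hmono : Monotone fun j : ℕ => a i + j * R := fun j j' h => by
    have : (j : ℝ) ≤ j' := by exact_mod_cast h
    nlinarith
  have := hmono.pairwise_disjoint_on_Ico_succ (Fin.val_injective.ne hi)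
  simp only [Function.onFun, Order.succ_eq_add_one, Nat.cast_add, Nat.cast_one] at this
  exact Set.disjoint_left.mpr fun x hxv hxw => Set.disjoint_left.mp this (hxv i) (hxw i)

lemma exists_mem_gridCell (a : Spc n) {R : ℝ} (hR : 0 < R) {x : Spc n}
    (hx : ∀ i, x i ∈ Set.Ico (a i) (a i + M * R)) : ∃ v : Fin n → Fin M, x ∈ gridCell a R v := by
  have hj : ∀ i, ⌊(x i - a i) / R⌋₊ < M := fun i => by
    rw [Nat.floor_lt (div_nonneg (by linarith [(hx i).1]) hR.le), div_lt_iff₀ hR]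
    linarith [(hx i).2]
  refine ⟨fun i => ⟨_, hj i⟩, fun i => ⟨?_, ?_⟩⟩
  · have := Nat.floor_le (div_nonneg (by linarith [(hx i).1] : 0 ≤ x i - a i) hR.le)
    rw [le_div_iff₀ hR] at this
    simp only
    linarith
  · have := Nat.lt_floor_add_one ((x i - a i) / R)
    rw [div_lt_iff₀ hR] at this
    simp only
    linarith

/-- Up to a null set, the grid cells partition the cube. -/
lemma sum_volume_inter_gridCell (a : Spc n) {R : ℝ} (hR : 0 < R) {E : Set (Spc n)}
    (hE : MeasurableSet E) (hEQ : E ⊆ Cube n a (M * R)) :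
    ∑ v : Fin n → Fin M, volume (E ∩ gridCell a R v) = volume E := by
  set H := {x : Spc n | ∀ i, x i ∈ Set.Ico (a i) (a i + M * R)}
  have hunion : volume (⋃ v : Fin n → Fin M, E ∩ gridCell a R v) =
      ∑ v : Fin n → Fin M, volume (E ∩ gridCell a R v) := by
    rw [measure_iUnion (fun v w hvw => ((pairwise_disjoint_gridCell a hR.le hvw).mono
      Set.inter_subset_right Set.inter_subset_right))
      (fun v => hE.inter (measurableSet_gridCell a R v)), tsum_fintype]
  rw [← hunion]
  refine le_antisymm (measure_mono (Set.iUnion_subset fun v => Set.inter_subset_left)) ?_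
  calc volume E ≤ volume (E ∩ H) + volume (Cube n a (M * R) \ H) := by
        refine (measure_mono fun x hx => ?_).trans (measure_union_le _ _)
        by_cases hxH : x ∈ H
        exacts [Or.inl ⟨hx, hxH⟩, Or.inr ⟨hEQ hx, hxH⟩]
    _ = volume (E ∩ H) := by rw [volume_cube_diff_Ico a (by positivity), add_zero]
    _ ≤ volume (⋃ v : Fin n → Fin M, E ∩ gridCell a R v) := measure_mono fun x ⟨hxE, hxH⟩ => by
        obtain ⟨v, hv⟩ := exists_mem_gridCell a hR hxH
        exact Set.mem_iUnion.mpr ⟨v, hxE, hv⟩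

lemma norm_sub_le_of_forall_abs_sub_le {x y : Spc n} {b : ℝ} (hb : 0 ≤ b)
    (hxy : ∀ i, |x i - y i| ≤ b) : ‖x - y‖ ≤ b * Real.sqrt n := by
  rw [EuclideanSpace.norm_eq, ← Real.sqrt_sq hb, ← Real.sqrt_mul (sq_nonneg b), mul_comm]
  refine Real.sqrt_le_sqrt ?_
  calc ∑ i, ‖(x - y) i‖ ^ 2 ≤ ∑ _i : Fin n, b ^ 2 := Finset.sum_le_sum fun i _ => by
        rw [PiLp.sub_apply, Real.norm_eq_abs]
        exact pow_le_pow_left₀ (abs_nonneg _) (hxy i) 2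
    _ = n * b ^ 2 := by simp

lemma norm_sub_le_of_mem_cube {a x y : Spc n} {h : ℝ} (hh : 0 ≤ h) (hx : x ∈ Cube n a h)
    (hy : y ∈ Cube n a h) : ‖x - y‖ ≤ h * Real.sqrt n :=
  norm_sub_le_of_forall_abs_sub_le hh fun i => abs_le.mpr
    ⟨by linarith [(hx i).1, (hy i).2], by linarith [(hx i).2, (hy i).1]⟩

lemma norm_sub_le_of_mem_gridCell {a x y : Spc n} {R : ℝ} (hR : 0 ≤ R) {v w : Fin n → Fin M}
    (hvw : GridNear v w) (hx : x ∈ gridCell a R v) (hy : y ∈ gridCell a R w) :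
    ‖x - y‖ ≤ 2 * R * Real.sqrt n := by
  refine norm_sub_le_of_forall_abs_sub_le (by positivity) fun i => abs_le.mpr ?_
  have h₁ : (v i : ℝ) ≤ w i + 1 := by exact_mod_cast (hvw i).1
  have h₂ : (w i : ℝ) ≤ v i + 1 := by exact_mod_cast (hvw i).2
  constructor <;> nlinarith [(hx i).1, (hx i).2, (hy i).1, (hy i).2]

end Cells

section Interaction

variable {n : ℕ} {s : ℝ}

lemma Ldb_mono {A A' D D' : Set (Spc n)} (hA : A' ⊆ A) (hD : D' ⊆ D) :
    Ldb n s A' D' ≤ Ldb n s A D :=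
  lintegral_mono' (Measure.restrict_mono hA le_rfl) fun _ =>
    lintegral_mono' (Measure.restrict_mono hD le_rfl) le_rfl

lemma sum_Ldb_le_of_pairwiseDisjoint {ι : Type*} {S : Finset ι} {A : ι → Set (Spc n)}
    {A₀ D : Set (Spc n)} (hA : ∀ i ∈ S, MeasurableSet (A i)) (hdisj : Set.PairwiseDisjoint S A)
    (hA₀ : ∀ i ∈ S, A i ⊆ A₀) : ∑ i ∈ S, Ldb n s (A i) D ≤ Ldb n s A₀ D := by
  simp only [Ldb]
  rw [← lintegral_biUnion_finset hdisj hA]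
  exact lintegral_mono' (Measure.restrict_mono (Set.iUnion₂_subset hA₀) le_rfl) le_rfl

/-- The kernel vanishes on the diagonal (`0 ^ p = 0` for `p ≠ 0`), hence the disjointness. -/
lemma volume_mul_volume_mul_le_Ldb (hns : 0 ≤ (n : ℝ) + 2 * s) {A D : Set (Spc n)}
    (hA : MeasurableSet A) (hD : MeasurableSet D) (hAD : Disjoint A D) {r : ℝ}
    (hr : ∀ x ∈ A, ∀ y ∈ D, ‖x - y‖ ≤ r) :
    volume A * volume D * ENNReal.ofReal (r ^ (-((n : ℝ) + 2 * s))) ≤ Ldb n s A D := by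
  calc volume A * volume D * ENNReal.ofReal (r ^ (-((n : ℝ) + 2 * s)))
      = ∫⁻ _ in A, ∫⁻ _ in D, ENNReal.ofReal (r ^ (-((n : ℝ) + 2 * s))) := by
        simp only [setLIntegral_const]; ring
    _ ≤ Ldb n s A D := setLIntegral_mono' hA fun x hx => setLIntegral_mono' hD fun y hy =>
        ENNReal.ofReal_le_ofReal <| Real.rpow_le_rpow_of_nonpos
          (norm_pos_iff.mpr (sub_ne_zero.mpr (hAD.ne_of_mem hx hy))) (hr x hx y hy)
          (by linarith)

end Interaction

lemma Finset.sum_le_card_filter_mul_add {ι : Type*} (S : Finset ι) {f : ι → ℝ} {b θ : ℝ}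
    (hθ : 0 ≤ θ) (hf : ∀ i ∈ S, f i ≤ b) : ∑ i ∈ S, f i ≤ #{i ∈ S | θ ≤ f i} * b + #S * θ := by
  rw [← sum_filter_add_sum_filter_not S (fun i => θ ≤ f i)]
  refine add_le_add ((sum_le_card_nsmul _ _ _ fun i hi => hf i (mem_filter.mp hi).1).trans
    (by rw [nsmul_eq_mul])) ((sum_le_card_nsmul _ _ θ fun i hi =>
      (not_le.mp (mem_filter.mp hi).2).le).trans ?_)
  rw [nsmul_eq_mul]
  exact mul_le_mul_of_nonneg_right (by exact_mod_cast card_filter_le _ _) hθ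

section GridMass

variable {n M : ℕ} (a : Spc n) {R : ℝ}

def cellMass (E : Set (Spc n)) (a : Spc n) (R : ℝ) (v : Fin n → Fin M) : ℝ :=
  (volume (E ∩ gridCell a R v)).toReal

def heavyCells (E : Set (Spc n)) (a : Spc n) (R θ : ℝ) : Finset (Fin n → Fin M) :=
  {v | θ ≤ cellMass E a R v}

lemma volume_inter_gridCell_ne_top (E : Set (Spc n)) (hR : 0 ≤ R) (v : Fin n → Fin M) :
    volume (E ∩ gridCell a R v) ≠ ⊤ :=
  ne_top_of_le_ne_top (by rw [volume_gridCell a hR]; exact ENNReal.ofReal_ne_top)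
    (measure_mono Set.inter_subset_right)

lemma cellMass_le (E : Set (Spc n)) (hR : 0 ≤ R) (v : Fin n → Fin M) :
    cellMass E a R v ≤ R ^ n := by
  rw [cellMass, ← ENNReal.toReal_ofReal (by positivity : 0 ≤ R ^ n), ← volume_gridCell a hR v]
  exact ENNReal.toReal_mono (by rw [volume_gridCell a hR]; exact ENNReal.ofReal_ne_top)
    (measure_mono Set.inter_subset_right)

lemma sum_cellMass (hR : 0 < R) {E : Set (Spc n)} (hE : MeasurableSet E)
    (hEQ : E ⊆ Cube n a (M * R)) :
    ∑ v : Fin n → Fin M, cellMass E a R v = (volume E).toReal := by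
  rw [← sum_volume_inter_gridCell a hR hE hEQ, ENNReal.toReal_sum fun v _ =>
    volume_inter_gridCell_ne_top a E hR.le v]
  rfl

lemma toReal_volume_le_card_heavyCells (hR : 0 < R) {E : Set (Spc n)} (hE : MeasurableSet E)
    (hEQ : E ⊆ Cube n a (M * R)) {θ : ℝ} (hθ : 0 ≤ θ) :
    (volume E).toReal ≤
      #(heavyCells E a R θ : Finset (Fin n → Fin M)) * R ^ n + M ^ n * θ := by
  rw [← sum_cellMass a hR hE hEQ]
  simpa [heavyCells] using
    sum_le_card_filter_mul_add univ hθ fun v _ => cellMass_le a E hR.le v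

lemma le_cellMass_add_cellMass_add_cellMass (hR : 0 ≤ R) (A D : Set (Spc n))
    (v : Fin n → Fin M) :
    R ^ n ≤ cellMass A a R v + cellMass D a R v +
      cellMass (Cube n a (M * R) \ (A ∪ D)) a R v := by
  have hcover : gridCell a R v ⊆ (A ∩ gridCell a R v ∪ D ∩ gridCell a R v) ∪
      (Cube n a (M * R) \ (A ∪ D)) ∩ gridCell a R v := fun x hx => by
    by_cases hxA : x ∈ A
    · exact Or.inl (Or.inl ⟨hxA, hx⟩)
    by_cases hxD : x ∈ D
    · exact Or.inl (Or.inr ⟨hxD, hx⟩)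
    exact Or.inr ⟨⟨gridCell_subset_cube a hR v hx, by simp [hxA, hxD]⟩, hx⟩
  have := (measure_mono (μ := volume) hcover).trans ((measure_union_le _ _).trans
    (add_le_add_left (measure_union_le _ _) _))
  rw [volume_gridCell a hR] at this
  have hfin : ∀ E, volume (E ∩ gridCell a R v) ≠ ⊤ := fun E =>
    volume_inter_gridCell_ne_top a E hR v
  rw [← ENNReal.toReal_ofReal (by positivity : 0 ≤ R ^ n)]
  refine (ENNReal.toReal_mono ?_ this).trans ?_
  · simp [ENNReal.add_eq_top, hfin]
  · rw [ENNReal.toReal_add (by simp [ENNReal.add_eq_top, hfin]) (hfin _),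
      ENNReal.toReal_add (hfin _) (hfin _)]
    rfl

end GridMass

section GridEstimate

variable {n M : ℕ} (a : Spc n) {R s : ℝ}

def nearHeavyCells (A D : Set (Spc n)) (a : Spc n) (R θ : ℝ) : Finset (Fin n → Fin M) :=
  {v ∈ heavyCells A a R θ | ∃ w ∈ heavyCells D a R θ, GridNear v w}

lemma card_compl_heavyCells_mul_le (hR : 0 < R) {A D : Set (Spc n)} (hA : MeasurableSet A)
    (hD : MeasurableSet D) (θ : ℝ) :
    #(heavyCells A a R θ ∪ heavyCells D a R θ : Finset (Fin n → Fin M))ᶜ * (R ^ n - 2 * θ) ≤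
      (volume (Cube n a (M * R) \ (A ∪ D))).toReal := by
  set B := Cube n a (M * R) \ (A ∪ D)
  have hlight : ∀ v ∈ (heavyCells A a R θ ∪ heavyCells D a R θ)ᶜ,
      R ^ n - 2 * θ ≤ cellMass B a R v := fun v hv => by
    simp only [heavyCells, mem_compl, mem_union, mem_filter, mem_univ, true_and, not_or,
      not_le] at hv
    linarith [le_cellMass_add_cellMass_add_cellMass a hR.le A D v]
  rw [← sum_cellMass a hR ((measurableSet_cube a _).diff (hA.union hD)) Set.sdiff_subset]
  calc _ = ∑ _v ∈ (heavyCells A a R θ ∪ heavyCells D a R θ)ᶜ, (R ^ n - 2 * θ) := by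
        rw [sum_const, nsmul_eq_mul]
    _ ≤ _ := (sum_le_sum hlight).trans (sum_le_sum_of_subset_of_nonneg (subset_univ _)
        fun _ _ _ => ENNReal.toReal_nonneg)

lemma le_one_of_mul_le_toReal_volume {h σ : ℝ} (hh : 0 < h) {E : Set (Spc n)}
    (hEQ : E ⊆ Cube n a h) (hEσ : σ * h ^ n ≤ (volume E).toReal) : σ ≤ 1 := by
  have hQ := volume_cube a hh.le
  have := hEσ.trans (ENNReal.toReal_mono (by rw [hQ]; exact ENNReal.ofReal_ne_top)
    (measure_mono hEQ))
  rw [hQ, ENNReal.toReal_ofReal (by positivity)] at this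
  exact (mul_le_iff_le_one_left (by positivity)).mp this

lemma card_heavyCells_ge (hR : 0 < R) {σ : ℝ} (hσ : 0 ≤ σ) {E : Set (Spc n)}
    (hE : MeasurableSet E) (hEQ : E ⊆ Cube n a (M * R))
    (hEσ : σ * (M * R) ^ n ≤ (volume E).toReal) :
    3 * σ / 4 * M ^ n ≤ #(heavyCells E a R (σ * R ^ n / 4) : Finset (Fin n → Fin M)) := by
  have := hEσ.trans
    (toReal_volume_le_card_heavyCells a hR hE hEQ (θ := σ * R ^ n / 4) (by positivity))
  rw [mul_pow] at this
  exact le_of_mul_le_mul_right (show 3 * σ / 4 * M ^ n * R ^ n ≤ _ * R ^ n by linarith)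
    (by positivity)

theorem card_nearHeavyCells_ge (hM : 0 < M) (hR : 0 < R) {σ ε : ℝ} (hσ : 0 < σ) (hε₀ : 0 ≤ ε)
    (hε : 8 * (2 * n + 1) * ε ≤ σ ^ 2) {A D : Set (Spc n)} (hA : MeasurableSet A)
    (hD : MeasurableSet D) (hAQ : A ⊆ Cube n a (M * R)) (hDQ : D ⊆ Cube n a (M * R))
    (hAσ : σ * (M * R) ^ n ≤ (volume A).toReal) (hDσ : σ * (M * R) ^ n ≤ (volume D).toReal)
    (hB : (volume (Cube n a (M * R) \ (A ∪ D))).toReal * M ≤ ε * (M * R) ^ n) :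
    2 * ε * M ^ n ≤ M * #(nearHeavyCells A D a R (σ * R ^ n / 4) : Finset (Fin n → Fin M)) := by
  set θ := σ * R ^ n / 4 with hθ
  set PA : Finset (Fin n → Fin M) := heavyCells A a R θ
  set PD : Finset (Fin n → Fin M) := heavyCells D a R θ
  have hRn : 0 < R ^ n := by positivity
  have hMR : (M * R) ^ n = M ^ n * R ^ n := mul_pow _ _ _
  have hσ1 := le_one_of_mul_le_toReal_volume a (by positivity) hAQ hAσ
  have hX := card_compl_heavyCells_mul_le a (M := M) hR hA hD θ
  have hcomb : (#PA * #PD : ℝ) ≤ (2 * n + 1) * (M ^ n * M) *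
      (#(nearHeavyCells A D a R θ : Finset (Fin n → Fin M)) + #(PA ∪ PD)ᶜ) := by
    have := card_mul_card_le_card_near hM PA PD
    rw [pow_succ] at this
    exact_mod_cast this
  set NS := (#(nearHeavyCells A D a R θ : Finset (Fin n → Fin M)) : ℝ)
  set NX := (#(PA ∪ PD)ᶜ : ℝ)
  have hm : (0 : ℝ) < M ^ n := by positivity
  have hMpos : (0 : ℝ) < M := by exact_mod_cast hM
  have hXM : NX * M ≤ 2 * ε * M ^ n := by
    have hlight : NX * (R ^ n / 2) ≤ NX * (R ^ n - 2 * θ) :=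
      mul_le_mul_of_nonneg_left (by rw [hθ]; nlinarith) (Nat.cast_nonneg _)
    have := (mul_le_mul_of_nonneg_right (hlight.trans hX) hMpos.le).trans hB
    rw [hMR] at this
    exact le_of_mul_le_mul_right (by linarith) hRn
  have hprod : (3 * σ / 4 * M ^ n) * (3 * σ / 4 * M ^ n) ≤ #PA * #PD :=
    mul_le_mul (card_heavyCells_ge a hR hσ.le hA hAQ hAσ)
      (card_heavyCells_ge a hR hσ.le hD hDQ hDσ) (by positivity) (Nat.cast_nonneg _)
  have hsum : 9 / 16 * σ ^ 2 * M ^ n ≤ (2 * n + 1) * (M * NS + M * NX) := by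
    refine le_of_mul_le_mul_right ?_ hm
    nlinarith
  have hn1 : (0 : ℝ) < 2 * n + 1 := by positivity
  have hSX : 5 / 2 * ε * M ^ n ≤ M * NS := by
    refine le_of_mul_le_mul_left ?_ hn1
    nlinarith
  linarith [mul_nonneg hε₀ hm.le]

lemma card_nearHeavyCells_mul_le_Ldb (hns : 0 ≤ (n : ℝ) + 2 * s) (hR : 0 ≤ R)
    {A D : Set (Spc n)} (hA : MeasurableSet A) (hD : MeasurableSet D) (hAD : Disjoint A D)
    (θ : ℝ) :
    #(nearHeavyCells A D a R θ : Finset (Fin n → Fin M)) * (ENNReal.ofReal θ * ENNReal.ofReal θ *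
      ENNReal.ofReal ((2 * R * Real.sqrt n) ^ (-((n : ℝ) + 2 * s)))) ≤ Ldb n s A D := by
  set κ := ENNReal.ofReal ((2 * R * Real.sqrt n) ^ (-((n : ℝ) + 2 * s)))
  have hcell : ∀ v ∈ (nearHeavyCells A D a R θ : Finset (Fin n → Fin M)),
      ENNReal.ofReal θ * ENNReal.ofReal θ * κ ≤ Ldb n s (A ∩ gridCell a R v) D := by
    intro v hv
    rw [nearHeavyCells, Finset.mem_filter] at hv
    obtain ⟨hvA, w, hwD, hvw⟩ := hv
    simp only [heavyCells, Finset.mem_filter, Finset.mem_univ, true_and] at hvA hwD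
    calc ENNReal.ofReal θ * ENNReal.ofReal θ * κ
        ≤ volume (A ∩ gridCell a R v) * volume (D ∩ gridCell a R w) * κ := by
          gcongr <;> exact ENNReal.ofReal_le_of_le_toReal ‹_›
      _ ≤ Ldb n s (A ∩ gridCell a R v) (D ∩ gridCell a R w) :=
          volume_mul_volume_mul_le_Ldb hns (hA.inter (measurableSet_gridCell a R v))
            (hD.inter (measurableSet_gridCell a R w))
            (hAD.mono Set.inter_subset_left Set.inter_subset_left)
            fun x hx y hy => norm_sub_le_of_mem_gridCell hR hvw hx.2 hy.2
      _ ≤ Ldb n s (A ∩ gridCell a R v) D := Ldb_mono subset_rfl Set.inter_subset_left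
  rw [← nsmul_eq_mul, ← sum_const]
  exact (sum_le_sum hcell).trans (sum_Ldb_le_of_pairwiseDisjoint
    (fun v _ => hA.inter (measurableSet_gridCell a R v))
    (fun v _ w _ hvw => (pairwise_disjoint_gridCell a hR hvw).mono Set.inter_subset_right
      Set.inter_subset_right) fun _ _ => Set.inter_subset_left)

end GridEstimate

lemma grid_rpow_scaling (n : ℕ) {M h c q : ℝ} (hM : 0 < M) (hh : 0 < h) (hc : 0 ≤ c) :
    M ^ n / M * ((h / M) ^ n) ^ 2 * (c * (h / M)) ^ (-q) =
      c ^ (-q) * h ^ (2 * n - q) * M ^ (q - n - 1) := by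
  have hh' : h ^ (2 * n - q) = h ^ (2 * n) * h ^ (-q) := by
    rw [sub_eq_add_neg, Real.rpow_add hh, ← Nat.cast_ofNat, ← Nat.cast_mul, Real.rpow_natCast]
  have hM' : M ^ (q - n - 1) = M ^ q / M ^ (n + 1) := by
    rw [sub_sub, Real.rpow_sub hM, ← Nat.cast_add_one, Real.rpow_natCast]
  have hM₀ := hM.ne'
  rw [Real.mul_rpow hc (by positivity), Real.div_rpow hh.le hM.le, Real.rpow_neg hM.le, hh', hM',
    div_pow]
  field_simp
  ring

theorem ofReal_le_Ldb_of_grid {n M : ℕ} (a : Spc n) {s h σ ε : ℝ} (hns : 0 ≤ (n : ℝ) + 2 * s)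
    (hM : 0 < M) (hh : 0 < h) (hσ : 0 < σ) (hε₀ : 0 ≤ ε) (hε : 8 * (2 * n + 1) * ε ≤ σ ^ 2)
    {A D : Set (Spc n)} (hA : MeasurableSet A) (hD : MeasurableSet D) (hAD : Disjoint A D)
    (hAQ : A ⊆ Cube n a h) (hDQ : D ⊆ Cube n a h) (hAσ : σ * h ^ n ≤ (volume A).toReal)
    (hDσ : σ * h ^ n ≤ (volume D).toReal)
    (hB : (volume (Cube n a h \ (A ∪ D))).toReal * M ≤ ε * h ^ n) :
    ENNReal.ofReal (2 * ε * (σ / 4) ^ 2 * (2 * Real.sqrt n) ^ (-((n : ℝ) + 2 * s)) *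
      h ^ ((n : ℝ) - 2 * s) * (M : ℝ) ^ (2 * s - 1)) ≤ Ldb n s A D := by
  have hMpos : (0 : ℝ) < M := by exact_mod_cast hM
  set R := h / M with hRdef
  have hR : 0 < R := div_pos hh hMpos
  have hMR : (M : ℝ) * R = h := mul_div_cancel₀ _ hMpos.ne'
  rw [← hMR] at hAQ hDQ hAσ hDσ hB
  have hcount := card_nearHeavyCells_ge a hM hR hσ hε₀ hε hA hD hAQ hDQ hAσ hDσ hB
  refine le_trans ?_
    (card_nearHeavyCells_mul_le_Ldb a (M := M) hns hR.le hA hD hAD (σ * R ^ n / 4))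
  have hθ : 0 ≤ σ * R ^ n / 4 := by positivity
  have hκ : 0 ≤ (2 * R * Real.sqrt n) ^ (-((n : ℝ) + 2 * s)) := by positivity
  rw [← ENNReal.ofReal_mul hθ, ← ENNReal.ofReal_mul (by positivity), ← ENNReal.ofReal_natCast,
    ← ENNReal.ofReal_mul (by positivity)]
  refine ENNReal.ofReal_le_ofReal ?_
  have hscale := grid_rpow_scaling n (q := (n : ℝ) + 2 * s) hMpos hh
    (by positivity : 0 ≤ 2 * Real.sqrt n)
  rw [show 2 * (n : ℝ) - (n + 2 * s) = n - 2 * s by ring,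
    show (n : ℝ) + 2 * s - n - 1 = 2 * s - 1 by ring, ← hRdef,
    show 2 * Real.sqrt n * R = 2 * R * Real.sqrt n by ring] at hscale
  calc 2 * ε * (σ / 4) ^ 2 * (2 * Real.sqrt n) ^ (-((n : ℝ) + 2 * s)) * h ^ ((n : ℝ) - 2 * s) *
        (M : ℝ) ^ (2 * s - 1)
      = 2 * ε * M ^ n / M * (σ * R ^ n / 4 * (σ * R ^ n / 4) *
          (2 * R * Real.sqrt n) ^ (-((n : ℝ) + 2 * s))) := by
        linear_combination (-(2 * ε * (σ / 4) ^ 2)) * hscale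
    _ ≤ _ := by
        gcongr
        exact (div_le_iff₀ hMpos).mpr (by linarith)

lemma ofReal_le_Ldb_of_cube {n : ℕ} (a : Spc n) {s h σ : ℝ} (hns : 0 ≤ (n : ℝ) + 2 * s)
    (hh : 0 < h) (hσ : 0 ≤ σ) {A D : Set (Spc n)} (hA : MeasurableSet A) (hD : MeasurableSet D)
    (hAD : Disjoint A D) (hAQ : A ⊆ Cube n a h) (hDQ : D ⊆ Cube n a h)
    (hAσ : σ * h ^ n ≤ (volume A).toReal) (hDσ : σ * h ^ n ≤ (volume D).toReal) :
    ENNReal.ofReal (σ ^ 2 * Real.sqrt n ^ (-((n : ℝ) + 2 * s)) * h ^ ((n : ℝ) - 2 * s)) ≤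
      Ldb n s A D := by
  refine le_trans ?_ (volume_mul_volume_mul_le_Ldb hns hA hD hAD (r := h * Real.sqrt n)
    fun x hx y hy => norm_sub_le_of_mem_cube hh.le (hAQ hx) (hDQ hy))
  have hscale := grid_rpow_scaling n (q := (n : ℝ) + 2 * s) one_pos hh (Real.sqrt_nonneg n)
  rw [show 2 * (n : ℝ) - (n + 2 * s) = n - 2 * s by ring] at hscale
  simp only [one_pow, div_one, Real.one_rpow, mul_one, one_mul] at hscale
  calc ENNReal.ofReal (σ ^ 2 * Real.sqrt n ^ (-((n : ℝ) + 2 * s)) * h ^ ((n : ℝ) - 2 * s))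
      = ENNReal.ofReal (σ * h ^ n) * ENNReal.ofReal (σ * h ^ n) *
          ENNReal.ofReal ((h * Real.sqrt n) ^ (-((n : ℝ) + 2 * s))) := by
        rw [← ENNReal.ofReal_mul (by positivity), ← ENNReal.ofReal_mul (by positivity),
          mul_comm h]
        congr 1
        linear_combination (-σ ^ 2) * hscale
    _ ≤ _ := by gcongr <;> exact ENNReal.ofReal_le_of_le_toReal ‹_›

/-- The grid bound with `M = ⌊ε hⁿ / b⌋₊` cells per side. -/
theorem ofReal_le_Ldb_of_toReal_volume_le {n : ℕ} (a : Spc n) {s h σ ε b : ℝ}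
    (hns : 0 ≤ (n : ℝ) + 2 * s) (hp : 0 ≤ 2 * s - 1) (hh : 0 < h) (hσ : 0 < σ) (hε₀ : 0 ≤ ε)
    (hε : 8 * (2 * n + 1) * ε ≤ σ ^ 2) (hb : 0 < b) (hx : 1 ≤ ε * (h ^ n / b))
    {A D : Set (Spc n)} (hA : MeasurableSet A) (hD : MeasurableSet D) (hAD : Disjoint A D)
    (hAQ : A ⊆ Cube n a h) (hDQ : D ⊆ Cube n a h) (hAσ : σ * h ^ n ≤ (volume A).toReal)
    (hDσ : σ * h ^ n ≤ (volume D).toReal) (hBb : (volume (Cube n a h \ (A ∪ D))).toReal ≤ b) :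
    ENNReal.ofReal (2 * ε * (σ / 4) ^ 2 * (2 * Real.sqrt n) ^ (-((n : ℝ) + 2 * s)) *
      h ^ ((n : ℝ) - 2 * s) * (ε * (h ^ n / b) / 2) ^ (2 * s - 1)) ≤ Ldb n s A D := by
  set M := ⌊ε * (h ^ n / b)⌋₊
  have hM : 0 < M := Nat.floor_pos.mpr hx
  have hMx : (M : ℝ) ≤ ε * (h ^ n / b) := Nat.floor_le (by positivity)
  have hxM : ε * (h ^ n / b) / 2 ≤ M := by
    have := Nat.lt_floor_add_one (ε * (h ^ n / b))
    have : (1 : ℝ) ≤ M := by exact_mod_cast hM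
    linarith
  have hB : (volume (Cube n a h \ (A ∪ D))).toReal * M ≤ ε * h ^ n := by
    calc _ ≤ b * M := by gcongr
      _ ≤ b * (ε * (h ^ n / b)) := by gcongr
      _ = ε * h ^ n := by field_simp
  refine le_trans (ENNReal.ofReal_le_ofReal ?_)
    (ofReal_le_Ldb_of_grid a hns hM hh hσ hε₀ hε hA hD hAD hAQ hDQ hAσ hDσ hB)
  gcongr

theorem exists_ofReal_le_Ldb {n : ℕ} (hn : 0 < n) {s σ : ℝ} (hs : 1 / 2 < s) (hσ : 0 < σ) :
    ∃ δ > 0, ∀ (a : Spc n) (h : ℝ), 0 < h → ∀ A D : Set (Spc n), MeasurableSet A →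
      MeasurableSet D → Disjoint A D → A ⊆ Cube n a h → D ⊆ Cube n a h →
      σ * h ^ n ≤ (volume A).toReal → σ * h ^ n ≤ (volume D).toReal →
      ∀ b : ℝ, 0 < b → (volume (Cube n a h \ (A ∪ D))).toReal ≤ b →
      ENNReal.ofReal (δ * h ^ ((n : ℝ) - 2 * s) * (h ^ n / b) ^ (2 * s - 1)) ≤ Ldb n s A D := by
  have hns : 0 ≤ (n : ℝ) + 2 * s := by positivity
  have hp : 0 < 2 * s - 1 := by linarith
  have hsqrt : 0 < Real.sqrt n := Real.sqrt_pos.mpr (Nat.cast_pos.mpr hn)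
  set ε := σ ^ 2 / (8 * (2 * n + 1))
  have hε : 8 * (2 * n + 1) * ε = σ ^ 2 := mul_div_cancel₀ _ (by positivity)
  have hε₀ : 0 < ε := by positivity
  set δ₁ := 2 * ε * (σ / 4) ^ 2 * (2 * Real.sqrt n) ^ (-((n : ℝ) + 2 * s)) * (ε / 2) ^ (2 * s - 1)
  set δ₂ := σ ^ 2 * Real.sqrt n ^ (-((n : ℝ) + 2 * s)) * ε ^ (2 * s - 1)
  refine ⟨min δ₁ δ₂, lt_min (by positivity) (by positivity), ?_⟩
  intro a h hh A D hA hD hAD hAQ hDQ hAσ hDσ b hb hBb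
  have hhb : 0 < h ^ n / b := by positivity
  rcases le_or_gt 1 (ε * (h ^ n / b)) with hx | hx
  · refine le_trans (ENNReal.ofReal_le_ofReal ?_) (ofReal_le_Ldb_of_toReal_volume_le a hns hp.le
      hh hσ hε₀.le hε.le hb hx hA hD hAD hAQ hDQ hAσ hDσ hBb)
    calc min δ₁ δ₂ * h ^ ((n : ℝ) - 2 * s) * (h ^ n / b) ^ (2 * s - 1)
        ≤ δ₁ * h ^ ((n : ℝ) - 2 * s) * (h ^ n / b) ^ (2 * s - 1) := by
          gcongr; exact min_le_left _ _
      _ = _ := by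
          rw [show ε * (h ^ n / b) / 2 = ε / 2 * (h ^ n / b) by ring,
            Real.mul_rpow (by positivity) hhb.le]
          ring
  · refine le_trans (ENNReal.ofReal_le_ofReal ?_)
      (ofReal_le_Ldb_of_cube a hns hh hσ.le hA hD hAD hAQ hDQ hAσ hDσ)
    calc min δ₁ δ₂ * h ^ ((n : ℝ) - 2 * s) * (h ^ n / b) ^ (2 * s - 1)
        ≤ δ₂ * h ^ ((n : ℝ) - 2 * s) * (h ^ n / b) ^ (2 * s - 1) := by
          gcongr; exact min_le_right _ _
      _ = σ ^ 2 * Real.sqrt n ^ (-((n : ℝ) + 2 * s)) * h ^ ((n : ℝ) - 2 * s) *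
            (ε * (h ^ n / b)) ^ (2 * s - 1) := by
          rw [Real.mul_rpow hε₀.le hhb.le]
          ring
      _ ≤ _ := mul_le_of_le_one_right (by positivity) (Real.rpow_le_one (by positivity) hx.le hp.le)

lemma eq_top_of_forall_ofReal_mul_div_rpow_le {L : ℝ≥0∞} {c V p : ℝ} (hc : 0 < c) (hV : 0 < V)
    (hp : 0 < p) (hL : ∀ b : ℝ, 0 < b → ENNReal.ofReal (c * (V / b) ^ p) ≤ L) : L = ⊤ := by
  by_contra hLtop
  set t := ((L.toReal + 1) / c) ^ p⁻¹
  have ht : 0 < t := by positivity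
  have := hL (V / t) (by positivity)
  rw [div_div_cancel₀ hV.ne', Real.rpow_inv_rpow (by positivity) hp.ne',
    mul_div_cancel₀ _ hc.ne', ENNReal.ofReal_le_iff_le_toReal hLtop] at this
  linarith

/-- localized estimate for `s ∈ (1/2,1)`. If `A, D ⊆ Q` are disjoint with
`min{|A|,|D|} ≥ σ|Q|` and `B := Q ∖ (A ∪ D)`, then
`L(A,D) ≥ δ |Q|^{(n-2s)/n} (|Q|/|B|)^{2s-1}`; here the extended-real quotient and power
make the right-hand side `+∞` when `|B| = 0`. -/
theorem localized_estimate_supercritical (n : ℕ) (hn : 2 ≤ n) (s : ℝ)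
    (hs : s ∈ Set.Ioo (1 / 2 : ℝ) 1) (σ : ℝ) (hσ : 0 < σ) :
    ∃ δ : ℝ, 0 < δ ∧ ∀ (a : Spc n) (h : ℝ), 0 < h → ∀ A D : Set (Spc n),
      MeasurableSet A → MeasurableSet D → Disjoint A D →
      A ⊆ Cube n a h → D ⊆ Cube n a h →
      ENNReal.ofReal σ * volume (Cube n a h) ≤ volume A →
      ENNReal.ofReal σ * volume (Cube n a h) ≤ volume D →
      ENNReal.ofReal (δ * (volume (Cube n a h)).toReal ^ (((n : ℝ) - 2 * s) / n)) *
          (volume (Cube n a h) / volume (Cube n a h \ (A ∪ D))) ^ (2 * s - 1) ≤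
        Ldb n s A D := by
  obtain ⟨δ, hδ, hbound⟩ := exists_ofReal_le_Ldb (by omega : 0 < n) hs.1 hσ
  refine ⟨δ, hδ, fun a h hh A D hA hD hAD hAQ hDQ hAσ hDσ => ?_⟩
  have hQ := volume_cube a hh.le
  have hfin : ∀ {E}, E ⊆ Cube n a h → volume E ≠ ⊤ := fun hEQ =>
    ne_top_of_le_ne_top (hQ ▸ ENNReal.ofReal_ne_top) (measure_mono hEQ)
  have hσE : ∀ {E}, E ⊆ Cube n a h → ENNReal.ofReal σ * volume (Cube n a h) ≤ volume E →
      σ * h ^ n ≤ (volume E).toReal := fun hEQ hEσ => by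
    rwa [hQ, ← ENNReal.ofReal_mul hσ.le, ENNReal.ofReal_le_iff_le_toReal (hfin hEQ)] at hEσ
  have hL := hbound a h hh A D hA hD hAD hAQ hDQ (hσE hAQ hAσ) (hσE hDQ hDσ)
  have hpow : (h ^ n) ^ (((n : ℝ) - 2 * s) / n) = h ^ ((n : ℝ) - 2 * s) := by
    rw [← Real.rpow_natCast, ← Real.rpow_mul hh.le, mul_div_cancel₀ _ (by positivity)]
  rw [hQ, ENNReal.toReal_ofReal (by positivity), hpow]
  rcases eq_or_ne (volume (Cube n a h \ (A ∪ D))) 0 with hB | hB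
  · rw [hB, ENNReal.div_zero (by positivity), ENNReal.top_rpow_of_pos (by linarith [hs.1]),
      ENNReal.mul_top (by positivity),
      eq_top_of_forall_ofReal_mul_div_rpow_le (by positivity) (by positivity)
        (by linarith [hs.1]) fun b hb => hL b hb (by simp [hB, hb.le])]
  · have hBtop := hfin (Set.sdiff_subset (t := A ∪ D))
    have hBpos := ENNReal.toReal_pos hB hBtop
    rw [← ENNReal.ofReal_toReal hBtop, ← ENNReal.ofReal_div_of_pos hBpos,
      ENNReal.ofReal_rpow_of_pos (by positivity), ← ENNReal.ofReal_mul (by positivity)]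
    exact hL _ hBpos le_rfl
end
end

section
/- Pointwise Sobolev-type inequality: let n ≥ 1 and s ∈ (0,1). There exists a constant c(n,s) > 0 such that for every x ∈ ℝ^n and every measurable set E ⊆ ℝ^n with 0 < |E| < ∞, one has ∫_{ℝ^n ∖ E} |x−y|^{−(n+2s)} dy ≥ c(n,s) |E|^{−2s/n}. -/
open MeasureTheory ENNReal

noncomputable section

/-! Let `B` be the ball centred at `x` with `|B| = 2|E|`, of radius `r ≍ |E| ^ (1/n)`. Then
`|B \ E| ≥ |E|`, and the kernel is at least `r ^ (-(n + 2s))` on `B`, so the integral over `Eᶜ` is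
at least `|E| r ^ (-(n + 2s)) ≍ |E| ^ (-2s/n)`. -/

open Metric Module

section

variable {F : Type*} [NormedAddCommGroup F] [MeasurableSpace F] (μ : Measure F)

theorem ofReal_rpow_neg_mul_measure_ball_sdiff_le [OpensMeasurableSpace F] [NullSingletonClass μ]
    {p r : ℝ} (hp : 0 ≤ p) (x : F) (A : Set F) :
    ENNReal.ofReal (r ^ (-p)) * μ (ball x r \ A) ≤
      ∫⁻ y in Aᶜ, ENNReal.ofReal (‖x - y‖ ^ (-p)) ∂μ := by
  have hbound : ∀ᵐ y ∂μ, y ∈ ball x r \ A →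
      ENNReal.ofReal (r ^ (-p)) ≤ ENNReal.ofReal (‖x - y‖ ^ (-p)) := by
    filter_upwards [measure_singleton (μ := μ) x |> measure_eq_zero_iff_ae_notMem.1] with y hyx hy
    have hxy : 0 < ‖x - y‖ := norm_pos_iff.2 (sub_ne_zero.2 (Ne.symm hyx))
    have hyr : ‖x - y‖ ≤ r := by simpa [dist_eq_norm, norm_sub_rev] using (mem_ball.1 hy.1).le
    exact ENNReal.ofReal_le_ofReal (Real.rpow_le_rpow_of_nonpos hxy hyr (neg_nonpos.2 hp))
  calc ENNReal.ofReal (r ^ (-p)) * μ (ball x r \ A)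
      = ∫⁻ _ in ball x r \ A, ENNReal.ofReal (r ^ (-p)) ∂μ := by rw [setLIntegral_const, mul_comm]
    _ ≤ ∫⁻ y in ball x r \ A, ENNReal.ofReal (‖x - y‖ ^ (-p)) ∂μ :=
      have hmeas : Measurable fun y ↦ ENNReal.ofReal (‖x - y‖ ^ (-p)) :=
        ((continuous_const.sub continuous_id).norm.measurable.pow_const _).ennreal_ofReal
      setLIntegral_mono_ae hmeas.aemeasurable hbound
    _ ≤ ∫⁻ y in Aᶜ, ENNReal.ofReal (‖x - y‖ ^ (-p)) ∂μ := lintegral_mono_set fun _ hy ↦ hy.2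

variable [NormedSpace ℝ F] [FiniteDimensional ℝ F] [μ.IsAddHaarMeasure]

theorem toReal_addHaar_ball_pos (x : F) {r : ℝ} (hr : 0 < r) : 0 < (μ (ball x r)).toReal :=
  ENNReal.toReal_pos (measure_ball_pos μ x hr).ne' measure_ball_lt_top.ne

variable [BorelSpace F] [Nontrivial F]

theorem addHaar_ball_div_rpow_inv_finrank (x : F) {t : ℝ} (ht : 0 ≤ t) :
    μ (ball x ((t / (μ (ball 0 1)).toReal) ^ (finrank ℝ F : ℝ)⁻¹)) = ENNReal.ofReal t := by
  have hω := toReal_addHaar_ball_pos μ (0 : F) one_pos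
  have hd : (finrank ℝ F : ℝ) ≠ 0 := by exact_mod_cast finrank_pos.ne'
  rw [Measure.addHaar_ball μ x (by positivity), ← Real.rpow_natCast,
    ← Real.rpow_mul (by positivity), inv_mul_cancel₀ hd, Real.rpow_one,
    ENNReal.ofReal_div_of_pos hω, ENNReal.ofReal_toReal measure_ball_lt_top.ne,
    ENNReal.div_mul_cancel (measure_ball_pos μ 0 one_pos).ne' measure_ball_lt_top.ne]

theorem exists_pos_ofReal_mul_rpow_le_setLIntegral_compl {p : ℝ} (hp : 0 ≤ p) :
    ∃ c : ℝ, 0 < c ∧ ∀ (x : F) (A : Set F), μ A ≠ 0 → μ A ≠ ⊤ →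
      ENNReal.ofReal (c * (μ A).toReal ^ (-p / finrank ℝ F)) ≤
        ∫⁻ y in Aᶜ, ENNReal.ofReal (‖x - y‖ ^ (-(finrank ℝ F + p))) ∂μ := by
  set d : ℝ := (finrank ℝ F : ℝ)
  set ω := (μ (ball (0 : F) 1)).toReal
  have hω : 0 < ω := toReal_addHaar_ball_pos μ 0 one_pos
  have hd : 0 < d := Nat.cast_pos.2 finrank_pos
  refine ⟨(2 / ω) ^ (-(d + p) / d), by positivity, fun x A hA0 hAtop ↦ ?_⟩
  set V := (μ A).toReal
  have hV : 0 < V := ENNReal.toReal_pos hA0 hAtop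
  set r := (2 * V / ω) ^ d⁻¹
  have hball : μ (ball x r) = μ A + μ A := by
    rw [addHaar_ball_div_rpow_inv_finrank μ x (by positivity), two_mul,
      ENNReal.ofReal_add hV.le hV.le, ENNReal.ofReal_toReal hAtop]
  have hsdiff : μ A ≤ μ (ball x r \ A) := by
    calc μ A = μ (ball x r) - μ A := by rw [hball, ENNReal.add_sub_cancel_right hAtop]
      _ ≤ μ (ball x r \ A) := le_measure_sdiff
  have hconst : (2 / ω) ^ (-(d + p) / d) * V ^ (-p / d) = r ^ (-(d + p)) * V := by
    have hr : r ^ (-(d + p)) = (2 / ω) ^ (-(d + p) / d) * V ^ (-(d + p) / d) := by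
      rw [← Real.mul_rpow (by positivity) hV.le, ← Real.rpow_mul (by positivity)]
      congr 1 <;> ring
    rw [hr, mul_assoc, ← Real.rpow_add_one hV.ne']
    congr 2
    field_simp
    ring
  calc ENNReal.ofReal ((2 / ω) ^ (-(d + p) / d) * V ^ (-p / d))
      = ENNReal.ofReal (r ^ (-(d + p))) * μ A := by
        rw [hconst, ENNReal.ofReal_mul (by positivity), ENNReal.ofReal_toReal hAtop]
    _ ≤ ENNReal.ofReal (r ^ (-(d + p))) * μ (ball x r \ A) := by gcongr
    _ ≤ ∫⁻ y in Aᶜ, ENNReal.ofReal (‖x - y‖ ^ (-(d + p))) ∂μ :=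
      ofReal_rpow_neg_mul_measure_ball_sdiff_le μ (by positivity) x A

end

/-- pointwise Sobolev-type inequality:
`∫_{ℝ^n∖E} |x-y|^{-(n+2s)} dy ≥ c(n,s) |E|^{-2s/n}`. -/
theorem pointwise_sobolev (n : ℕ) (hn : 1 ≤ n) (s : ℝ) (hs : s ∈ Set.Ioo (0 : ℝ) 1) :
    ∃ c : ℝ, 0 < c ∧ ∀ (x : Spc n) (E : Set (Spc n)), MeasurableSet E →
      0 < volume E → volume E < ⊤ →
      ENNReal.ofReal (c * (volume E).toReal ^ (-(2 * s) / n)) ≤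
        ∫⁻ y in Eᶜ, ENNReal.ofReal (‖x - y‖ ^ (-((n : ℝ) + 2 * s))) := by
  have : NeZero n := ⟨by omega⟩
  obtain ⟨c, hc, hbound⟩ :=
    exists_pos_ofReal_mul_rpow_le_setLIntegral_compl (volume : Measure (Spc n)) (p := 2 * s)
      (by linarith [hs.1])
  refine ⟨c, hc, fun x E _ hE0 hEtop ↦ ?_⟩
  simpa only [finrank_euclideanSpace_fin] using hbound x E hE0.ne' hEtop.ne
end
end

section
/- Sobolev-type inequality for pairs of sets: let n ≥ 1 and s ∈ (0,1). There exists a constant c(n,s) > 0 such that for all measurable sets E, F ⊆ ℝ^n with 0 < |E| < ∞ and |F| < ∞, one has ∫_F ∫_{ℝ^n ∖ E} |x−y|^{−(n+2s)} dy dx ≥ c(n,s) |F| |E|^{−2s/n}. -/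
/-!
For every `x`, the ball `B` around `x` with `|B| = 2|E|` satisfies `|B ∖ E| ≥ |E|`, and on `B` the
kernel is at least `r^{-(n+2s)}`, where `r ~ |E|^{1/n}` is the radius of `B`. Hence the inner
integral is at least `|E|^{1-(n+2s)/n} = |E|^{-2s/n}` up to a dimensional constant, uniformly in
`x`, and integrating over `F` gives the claim.
-/

open MeasureTheory ENNReal

noncomputable section

open Metric Module

theorem measure_le_measure_sdiff_of_two_mul_le {α : Type*} [MeasurableSpace α] {μ : Measure α}
    {A E : Set α} (hE : μ E ≠ ∞) (h : 2 * μ E ≤ μ A) : μ E ≤ μ (A \ E) :=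
  calc μ E ≤ μ A - μ E := ENNReal.le_sub_of_add_le_right hE (by rwa [← two_mul])
    _ ≤ μ (A \ E) := le_measure_sdiff

theorem le_lintegral_compl_rpow_neg_of_two_mul_le_ball {X : Type*} [NormedAddCommGroup X]
    [MeasurableSpace X] [OpensMeasurableSpace X] {μ : Measure X} [NullSingletonClass μ]
    {p R : ℝ} (hp : 0 ≤ p) {E : Set X} (hE : μ E ≠ ∞) {x : X} (hball : 2 * μ E ≤ μ (ball x R)) :
    ENNReal.ofReal (R ^ (-p)) * μ E ≤ ∫⁻ y in Eᶜ, ENNReal.ofReal (‖x - y‖ ^ (-p)) ∂μ := by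
  -- `x` is removed because `0 ^ (-p) = 0` in `ℝ`.
  set S := (ball x R \ {x}) \ E
  have hES : μ E ≤ μ S := measure_le_measure_sdiff_of_two_mul_le hE <| by
    rwa [measure_sdiff_null (measure_singleton x)]
  have hkernel : ∀ y ∈ S, ENNReal.ofReal (R ^ (-p)) ≤ ENNReal.ofReal (‖x - y‖ ^ (-p)) := by
    rintro y ⟨⟨hyR, hyx⟩, -⟩
    refine ENNReal.ofReal_le_ofReal (Real.rpow_le_rpow_of_nonpos ?_ ?_ (neg_nonpos.2 hp))
    · exact norm_pos_iff.2 (sub_ne_zero.2 (Ne.symm hyx))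
    · simpa [dist_eq_norm, norm_sub_rev] using (mem_ball.1 hyR).le
  calc ENNReal.ofReal (R ^ (-p)) * μ E ≤ ENNReal.ofReal (R ^ (-p)) * μ S := by gcongr
    _ = ∫⁻ _ in S, ENNReal.ofReal (R ^ (-p)) ∂μ := (setLIntegral_const _ _).symm
    _ ≤ ∫⁻ y in S, ENNReal.ofReal (‖x - y‖ ^ (-p)) ∂μ := setLIntegral_mono
        ((continuous_const.sub continuous_id).norm.measurable.pow_const _).ennreal_ofReal hkernel
    _ ≤ ∫⁻ y in Eᶜ, ENNReal.ofReal (‖x - y‖ ^ (-p)) ∂μ := lintegral_mono_set fun _ hy ↦ hy.2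

section AddHaar

variable {V : Type*} [NormedAddCommGroup V] [NormedSpace ℝ V] [FiniteDimensional ℝ V]
  [MeasurableSpace V] [BorelSpace V] (μ : Measure V) [μ.IsAddHaarMeasure]

theorem addHaar_ball_rpow_inv_finrank (hd : 0 < finrank ℝ V) (x : V) {t : ℝ} (ht : 0 ≤ t) :
    μ (ball x ((t / (μ (ball 0 1)).toReal) ^ (finrank ℝ V : ℝ)⁻¹)) = ENNReal.ofReal t := by
  have := Module.nontrivial_of_finrank_pos (R := ℝ) hd
  have hB : μ (ball (0 : V) 1) ≠ ∞ := measure_ball_lt_top.ne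
  have hB₀ : μ (ball (0 : V) 1) ≠ 0 := (measure_ball_pos μ 0 one_pos).ne'
  rw [Measure.addHaar_ball μ x (by positivity), ← Real.rpow_natCast,
    ← Real.rpow_mul (by positivity), inv_mul_cancel₀ (by positivity), Real.rpow_one,
    ENNReal.ofReal_div_of_pos (toReal_pos hB₀ hB), ENNReal.ofReal_toReal hB,
    ENNReal.div_mul_cancel hB₀ hB]

theorem le_lintegral_compl_rpow_neg_addHaar (hd : 0 < finrank ℝ V) {p : ℝ} (hp : 0 ≤ p)
    {E : Set V} (hE : μ E ≠ ∞) (x : V) :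
    ENNReal.ofReal (((2 * (μ E).toReal / (μ (ball 0 1)).toReal) ^ (finrank ℝ V : ℝ)⁻¹) ^ (-p) *
        (μ E).toReal) ≤
      ∫⁻ y in Eᶜ, ENNReal.ofReal (‖x - y‖ ^ (-p)) ∂μ := by
  have := Module.nontrivial_of_finrank_pos (R := ℝ) hd
  rw [ENNReal.ofReal_mul (by positivity), ENNReal.ofReal_toReal hE]
  refine le_lintegral_compl_rpow_neg_of_two_mul_le_ball hp hE ?_
  rw [addHaar_ball_rpow_inv_finrank μ hd x (by positivity), ENNReal.ofReal_mul zero_le_two,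
    ENNReal.ofReal_toReal hE, ENNReal.ofReal_ofNat]

end AddHaar

theorem rpow_inv_rpow_neg_mul {a e d q : ℝ} (ha : 0 < a) (he : 0 < e) (hd : d ≠ 0) :
    ((a * e) ^ d⁻¹) ^ (-(d + q)) * e = a ^ (-((d + q) / d)) * e ^ (-q / d) := by
  rw [← Real.rpow_mul (by positivity), Real.mul_rpow ha.le he.le, mul_assoc,
    ← Real.rpow_add_one he.ne']
  congr 2
  · field_simp
  · field_simp
    ring

/-- Sobolev-type inequality for pairs of sets:
`∫_F ∫_{ℝ^n∖E} |x-y|^{-(n+2s)} dy dx ≥ c(n,s) |F| |E|^{-2s/n}`. -/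
theorem pair_sobolev (n : ℕ) (hn : 1 ≤ n) (s : ℝ) (hs : s ∈ Set.Ioo (0 : ℝ) 1) :
    ∃ c : ℝ, 0 < c ∧ ∀ E F : Set (Spc n), MeasurableSet E → MeasurableSet F →
      0 < volume E → volume E < ⊤ → volume F < ⊤ →
      ENNReal.ofReal (c * (volume F).toReal * (volume E).toReal ^ (-(2 * s) / n)) ≤
        ∫⁻ x in F, ∫⁻ y in Eᶜ, ENNReal.ofReal (‖x - y‖ ^ (-((n : ℝ) + 2 * s))) := by
  have hd : finrank ℝ (Spc n) = n := finrank_euclideanSpace_fin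
  set ω := (volume (ball (0 : Spc n) 1)).toReal
  have hω : 0 < ω := toReal_pos (measure_ball_pos _ _ one_pos).ne' measure_ball_lt_top.ne
  refine ⟨(2 / ω) ^ (-((n + 2 * s) / n)), by positivity, fun E F _ _ hE0 hE hF ↦ ?_⟩
  have he : 0 < (volume E).toReal := toReal_pos hE0.ne' hE.ne
  have hinner (x : Spc n) : ENNReal.ofReal ((2 / ω) ^ (-((n + 2 * s) / n)) *
      (volume E).toReal ^ (-(2 * s) / n)) ≤
        ∫⁻ y in Eᶜ, ENNReal.ofReal (‖x - y‖ ^ (-((n : ℝ) + 2 * s))) := by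
    convert le_lintegral_compl_rpow_neg_addHaar volume (by rw [hd]; omega)
      (by linarith [hs.1] : (0 : ℝ) ≤ n + 2 * s) hE.ne x using 2
    rw [hd, mul_div_right_comm, rpow_inv_rpow_neg_mul (by positivity) he (by positivity)]
  calc ENNReal.ofReal ((2 / ω) ^ (-((n + 2 * s) / n)) * (volume F).toReal *
          (volume E).toReal ^ (-(2 * s) / n))
      = ∫⁻ _ in F, ENNReal.ofReal ((2 / ω) ^ (-((n + 2 * s) / n)) *
          (volume E).toReal ^ (-(2 * s) / n)) := by
        rw [setLIntegral_const, mul_right_comm, ENNReal.ofReal_mul (by positivity),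
          ENNReal.ofReal_toReal hF.ne]
    _ ≤ _ := lintegral_mono hinner
end
end
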